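/- arXiv:1809.03079 — 7 statements merged into one kernel-verified Lean document; each statement's English description precedes it below -/
import Mathlib

section
/- For p > 1 and a sequence of nonnegative reals (a_n), if not all a_n are zero and Σ a_n^p converges, then Σ_{n=1}^∞ ((1/n) Σ_{k=1}^n a_k)^p < (p/(p-1))^p Σ_{n=1}^∞ a_n^p (the discrete Hardy inequality). -/
/-!
Elliott's proof. With `A n` the mean of the first `n` terms, `(n + 1) A (n + 1) = n A n + a n`,
and the tangent-line inequality for `t ↦ t ^ p` at `A (n + 1)` turns this into
`(p - 1) A (n + 1) ^ p - p a n A (n + 1) ^ (p - 1) + n gₙ = n A n ^ p - (n + 1) A (n + 1) ^ p`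
with a tangent-line gap `gₙ ≥ 0`. The right side telescopes to `-N A N ^ p ≤ 0`, and Hölder bounds
`∑ a n A (n + 1) ^ (p - 1)` by `‖a‖_p ‖A‖_p ^ (p - 1)`, so `‖A‖_p ≤ p / (p - 1) ‖a‖_p` on partial
sums. Strictness: if every gap with `n ≥ 1` vanished, `a` would be constant, hence zero by
summability; a positive gap survives the passage to the limit.
-/

open Filter Finset Real

/-- The paper's `A_n = (a_1 + ⋯ + a_n) / n`, with `a k` standing for `a_{k+1}`
(and the junk value `A_0 = 0`). -/
noncomputable def cesaroMean (a : ℕ → ℝ) (n : ℕ) : ℝ := (∑ k ∈ range n, a k) / n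

lemma cesaroMean_nonneg {a : ℕ → ℝ} (ha : ∀ n, 0 ≤ a n) (n : ℕ) : 0 ≤ cesaroMean a n :=
  div_nonneg (sum_nonneg fun k _ => ha k) n.cast_nonneg

lemma natCast_mul_cesaroMean (a : ℕ → ℝ) (n : ℕ) :
    n * cesaroMean a n = ∑ k ∈ range n, a k := by
  rcases n.eq_zero_or_pos with rfl | hn
  · simp
  · exact mul_div_cancel₀ _ (by positivity)

lemma succ_mul_cesaroMean_succ (a : ℕ → ℝ) (n : ℕ) :
    (n + 1) * cesaroMean a (n + 1) = n * cesaroMean a n + a n := by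
  rw [natCast_mul_cesaroMean, ← sum_range_succ, ← natCast_mul_cesaroMean, Nat.cast_succ]

lemma eq_of_cesaroMean_succ_eq {a : ℕ → ℝ}
    (h : ∀ n, 1 ≤ n → cesaroMean a (n + 1) = cesaroMean a n) (n : ℕ) : a n = a 0 := by
  have hconst : ∀ n, cesaroMean a (n + 1) = a 0 := by
    intro n
    induction n with
    | zero => simpa using succ_mul_cesaroMean_succ a 0
    | succ m ih => rw [h (m + 1) (by omega), ih]
  have hmul : ∀ n : ℕ, n * cesaroMean a n = n * a 0 := by
    rintro (_ | m)
    · simp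
    · rw [hconst]
  have := succ_mul_cesaroMean_succ a n
  rw [hconst, hmul] at this
  linarith

noncomputable def rpowTangentGap (p x y : ℝ) : ℝ := x ^ p - (y ^ p + p * y ^ (p - 1) * (x - y))

lemma mul_rpow_sub_one {p y : ℝ} (hp : p ≠ 0) (hy : 0 ≤ y) : y * y ^ (p - 1) = y ^ p := by
  rw [← rpow_one_add' hy (by simpa using hp), add_sub_cancel]

lemma rpowTangentGap_pos {p x y : ℝ} (hp : 1 < p) (hx : 0 ≤ x) (hy : 0 ≤ y) (hxy : x ≠ y) :
    0 < rpowTangentGap p x y := by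
  rcases hy.eq_or_lt with rfl | hy
  · have hx : 0 < x := hx.lt_of_ne hxy.symm
    simp [rpowTangentGap, zero_rpow (by linarith : p ≠ 0), zero_rpow (by linarith : p - 1 ≠ 0),
      rpow_pos_of_pos hx]
  · have hs : -1 ≤ x / y - 1 := by linarith [div_nonneg hx hy.le]
    have hs' : x / y - 1 ≠ 0 := sub_ne_zero.2 fun h => hxy (by field_simp at h; linarith)
    have bernoulli := one_add_mul_self_lt_rpow_one_add hs hs' hp
    rw [add_sub_cancel, div_rpow hx hy.le, lt_div_iff₀ (rpow_pos_of_pos hy p)] at bernoulli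
    have hyp := mul_rpow_sub_one (by linarith : p ≠ 0) hy.le
    field_simp at bernoulli
    rw [← mul_pos_iff_of_pos_left hy, rpowTangentGap]
    linear_combination bernoulli + p * (x - y) * hyp

lemma rpowTangentGap_nonneg {p x y : ℝ} (hp : 1 < p) (hx : 0 ≤ x) (hy : 0 ≤ y) :
    0 ≤ rpowTangentGap p x y := by
  rcases eq_or_ne x y with rfl | hxy
  · simp [rpowTangentGap]
  · exact (rpowTangentGap_pos hp hx hy hxy).le

lemma mul_rpow_sub_succ_mul_rpow_eq {p n x y c : ℝ} (hp : p ≠ 0) (hy : 0 ≤ y)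
    (h : (n + 1) * y = n * x + c) :
    n * x ^ p - (n + 1) * y ^ p
      = (p - 1) * y ^ p - p * (c * y ^ (p - 1)) + n * rpowTangentGap p x y := by
  rw [rpowTangentGap]
  linear_combination -p * y ^ (p - 1) * h + p * mul_rpow_sub_one hp hy

lemma sub_one_mul_sum_cesaroMean_rpow_add_le {p : ℝ} (hp : 1 < p) {a : ℕ → ℝ}
    (ha : ∀ n, 0 ≤ a n) (N : ℕ) :
    (p - 1) * ∑ n ∈ range N, cesaroMean a (n + 1) ^ p
        + ∑ n ∈ range N, n * rpowTangentGap p (cesaroMean a n) (cesaroMean a (n + 1))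
      ≤ p * ∑ n ∈ range N, a n * cesaroMean a (n + 1) ^ (p - 1) := by
  have telescope : ∑ n ∈ range N, ((n : ℝ) * cesaroMean a n ^ p
      - (n + 1) * cesaroMean a (n + 1) ^ p) = - (N * cesaroMean a N ^ p) := by
    simpa using sum_range_sub' (fun n : ℕ => (n : ℝ) * cesaroMean a n ^ p) N
  rw [sum_congr rfl fun n _ => mul_rpow_sub_succ_mul_rpow_eq (by linarith)
    (cesaroMean_nonneg ha _) (succ_mul_cesaroMean_succ a n), sum_add_distrib, sum_sub_distrib,
    ← mul_sum, ← mul_sum] at telescope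
  have := cesaroMean_nonneg ha N
  have : 0 ≤ (N : ℝ) * cesaroMean a N ^ p := by positivity
  linarith

lemma sum_mul_cesaroMean_rpow_le {p q : ℝ} (hpq : p.HolderConjugate q) {a : ℕ → ℝ}
    (ha : ∀ n, 0 ≤ a n) (N : ℕ) :
    ∑ n ∈ range N, a n * cesaroMean a (n + 1) ^ (p - 1)
      ≤ (∑ n ∈ range N, a n ^ p) ^ (1 / p)
        * (∑ n ∈ range N, cesaroMean a (n + 1) ^ p) ^ (1 / q) := by
  have hA := cesaroMean_nonneg ha
  convert inner_le_Lp_mul_Lq_of_nonneg (range N) hpq (fun n _ => ha n)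
    (fun n _ => rpow_nonneg (hA (n + 1)) (p - 1)) using 4 with n
  rw [← rpow_mul (hA _), hpq.sub_one_mul_conj]

lemma mul_rpow_mul_rpow_sub_eq {p q s t : ℝ} (hpq : p.HolderConjugate q) (hs : 0 < s)
    (ht : 0 ≤ t) :
    p * (t ^ (1 / p) * s ^ (1 / q)) - (p - 1) * s
      = (p - 1) * s ^ (1 / q) * ((q ^ p * t) ^ (1 / p) - s ^ (1 / p)) := by
  have hs_split : s = s ^ (1 / p) * s ^ (1 / q) := by
    rw [← rpow_add hs, hpq.one_div_add_one_div, div_one, rpow_one]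
  rw [mul_rpow (rpow_nonneg hpq.symm.nonneg p) ht, ← rpow_mul hpq.symm.nonneg,
    mul_one_div_cancel hpq.ne_zero, rpow_one]
  nth_rewrite 2 [hs_split]
  linear_combination (-(s ^ (1 / q)) * t ^ (1 / p)) * hpq.sub_one_mul_conj

lemma le_rpow_mul_of_sub_one_mul_le {p q s t : ℝ} (hpq : p.HolderConjugate q) (hs : 0 ≤ s)
    (ht : 0 ≤ t) (h : (p - 1) * s ≤ p * (t ^ (1 / p) * s ^ (1 / q))) : s ≤ q ^ p * t := by
  rcases hs.eq_or_lt with rfl | hs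
  · positivity [hpq.symm.nonneg]
  rwa [← sub_nonneg, mul_rpow_mul_rpow_sub_eq hpq hs ht,
    mul_nonneg_iff_of_pos_left (mul_pos hpq.sub_one_pos (rpow_pos_of_pos hs _)), sub_nonneg,
    rpow_le_rpow_iff hs.le (by positivity [hpq.symm.nonneg]) hpq.one_div_pos] at h

lemma lt_rpow_mul_of_sub_one_mul_lt {p q s t : ℝ} (hpq : p.HolderConjugate q) (hs : 0 ≤ s)
    (ht : 0 ≤ t) (h : (p - 1) * s < p * (t ^ (1 / p) * s ^ (1 / q))) : s < q ^ p * t := by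
  rcases hs.eq_or_lt with rfl | hs
  · simp [zero_rpow hpq.symm.inv_ne_zero] at h
  rwa [← sub_pos, mul_rpow_mul_rpow_sub_eq hpq hs ht,
    mul_pos_iff_of_pos_left (mul_pos hpq.sub_one_pos (rpow_pos_of_pos hs _)), sub_pos,
    rpow_lt_rpow_iff hs.le (by positivity [hpq.symm.nonneg]) hpq.one_div_pos] at h

lemma sub_one_mul_sum_cesaroMean_rpow_add_le_tsum {p q : ℝ} (hpq : p.HolderConjugate q)
    {a : ℕ → ℝ} (ha : ∀ n, 0 ≤ a n) (hsum : Summable fun n => a n ^ p) (N : ℕ) :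
    (p - 1) * ∑ n ∈ range N, cesaroMean a (n + 1) ^ p
        + ∑ n ∈ range N, n * rpowTangentGap p (cesaroMean a n) (cesaroMean a (n + 1))
      ≤ p * ((∑' n, a n ^ p) ^ (1 / p) * (∑ n ∈ range N, cesaroMean a (n + 1) ^ p) ^ (1 / q)) := by
  have hpow : ∀ n, 0 ≤ a n ^ p := fun n => rpow_nonneg (ha n) p
  have hsum_le : (∑ n ∈ range N, a n ^ p) ^ (1 / p) ≤ (∑' n, a n ^ p) ^ (1 / p) :=
    rpow_le_rpow (sum_nonneg fun n _ => hpow n) (hsum.sum_le_tsum _ fun n _ => hpow n)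
      hpq.one_div_nonneg
  have hS : 0 ≤ (∑ n ∈ range N, cesaroMean a (n + 1) ^ p) ^ (1 / q) :=
    rpow_nonneg (sum_nonneg fun n _ => rpow_nonneg (cesaroMean_nonneg ha _) p) _
  exact (sub_one_mul_sum_cesaroMean_rpow_add_le hpq.lt ha N).trans <| mul_le_mul_of_nonneg_left
    ((sum_mul_cesaroMean_rpow_le hpq ha N).trans (mul_le_mul_of_nonneg_right hsum_le hS))
    hpq.nonneg

lemma summable_cesaroMean_rpow {p q : ℝ} (hpq : p.HolderConjugate q) {a : ℕ → ℝ}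
    (ha : ∀ n, 0 ≤ a n) (hsum : Summable fun n => a n ^ p) :
    Summable fun n => cesaroMean a (n + 1) ^ p := by
  have hpow : ∀ n, 0 ≤ cesaroMean a (n + 1) ^ p := fun n => rpow_nonneg (cesaroMean_nonneg ha _) p
  have hgap : ∀ n : ℕ, 0 ≤ (n : ℝ) * rpowTangentGap p (cesaroMean a n) (cesaroMean a (n + 1)) :=
    fun n => mul_nonneg n.cast_nonneg
      (rpowTangentGap_nonneg hpq.lt (cesaroMean_nonneg ha _) (cesaroMean_nonneg ha _))
  have hT : 0 ≤ ∑' n, a n ^ p := tsum_nonneg fun n => rpow_nonneg (ha n) p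
  refine summable_of_sum_range_le hpow fun N =>
    le_rpow_mul_of_sub_one_mul_le hpq (sum_nonneg fun n _ => hpow n) hT ?_
  exact (le_add_of_nonneg_right (sum_nonneg fun n _ => hgap n)).trans
    (sub_one_mul_sum_cesaroMean_rpow_add_le_tsum hpq ha hsum N)

lemma exists_cesaroMean_succ_ne {p : ℝ} (hp : 0 < p) {a : ℕ → ℝ} (ha : ∀ n, 0 ≤ a n)
    (hne : ∃ n, a n ≠ 0) (hsum : Summable fun n => a n ^ p) :
    ∃ n, 1 ≤ n ∧ cesaroMean a (n + 1) ≠ cesaroMean a n := by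
  by_contra! h
  obtain ⟨n, hn⟩ := hne
  have hconst := eq_of_cesaroMean_succ_eq h
  simp_rw [hconst] at hsum
  rw [hconst, Ne, ← rpow_eq_zero (ha 0) hp.ne'] at hn
  exact hn ((summable_const_iff _).1 hsum)

lemma sub_one_mul_tsum_cesaroMean_rpow_lt {p q : ℝ} (hpq : p.HolderConjugate q) {a : ℕ → ℝ}
    (ha : ∀ n, 0 ≤ a n) (hne : ∃ n, a n ≠ 0) (hsum : Summable fun n => a n ^ p) :
    (p - 1) * ∑' n, cesaroMean a (n + 1) ^ p
      < p * ((∑' n, a n ^ p) ^ (1 / p) * (∑' n, cesaroMean a (n + 1) ^ p) ^ (1 / q)) := by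
  have hA := cesaroMean_nonneg ha
  set gap : ℕ → ℝ := fun n => n * rpowTangentGap p (cesaroMean a n) (cesaroMean a (n + 1))
  have hgap : ∀ n, 0 ≤ gap n :=
    fun n => mul_nonneg n.cast_nonneg (rpowTangentGap_nonneg hpq.lt (hA _) (hA _))
  obtain ⟨n₀, hn₀, hne₀⟩ := exists_cesaroMean_succ_ne hpq.pos ha hne hsum
  have hgap_pos : 0 < gap n₀ :=
    mul_pos (by exact_mod_cast hn₀) (rpowTangentGap_pos hpq.lt (hA _) (hA _) hne₀.symm)
  have hS := (summable_cesaroMean_rpow hpq ha hsum).hasSum.tendsto_sum_nat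
  suffices (p - 1) * ∑' n, cesaroMean a (n + 1) ^ p + gap n₀
      ≤ p * ((∑' n, a n ^ p) ^ (1 / p) * (∑' n, cesaroMean a (n + 1) ^ p) ^ (1 / q)) by linarith
  refine le_of_tendsto_of_tendsto ((hS.const_mul _).add_const _)
    (((hS.rpow_const (Or.inr hpq.symm.one_div_nonneg)).const_mul _).const_mul _) ?_
  filter_upwards [eventually_gt_atTop n₀] with N hN
  grw [← sub_one_mul_sum_cesaroMean_rpow_add_le_tsum hpq ha hsum N,
    ← single_le_sum (fun n _ => hgap n) (mem_range.2 hN)]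

/-- Discrete Hardy inequality: for `p > 1` and a nonnegative, not identically zero
sequence `(a_n)_{n ≥ 1}` (here `a n` stands for `a_{n+1}`) with `Σ a_n^p < ∞`,
`Σ ((1/n) Σ_{k ≤ n} a_k)^p < (p/(p-1))^p Σ a_n^p`. -/
theorem stmt0 (p : ℝ) (hp : 1 < p) (a : ℕ → ℝ) (ha : ∀ n, 0 ≤ a n)
    (hne : ∃ n, a n ≠ 0) (hsum : Summable fun n => a n ^ p) :
    ∑' n : ℕ, ((1 / (n + 1 : ℝ)) * ∑ k ∈ Finset.range (n + 1), a k) ^ p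
      < (p / (p - 1)) ^ p * ∑' n : ℕ, a n ^ p := by
  have hpq : p.HolderConjugate (p / (p - 1)) := (holderConjugate_iff_eq_conjExponent hp).2 rfl
  have hlhs : (fun n : ℕ => ((1 / (n + 1 : ℝ)) * ∑ k ∈ range (n + 1), a k) ^ p)
      = fun n => cesaroMean a (n + 1) ^ p := by
    ext n
    rw [cesaroMean, Nat.cast_succ, one_div_mul_eq_div]
  rw [hlhs]
  exact lt_rpow_mul_of_sub_one_mul_lt hpq
    (tsum_nonneg fun n => rpow_nonneg (cesaroMean_nonneg ha _) p)
    (tsum_nonneg fun n => rpow_nonneg (ha n) p)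
    (sub_one_mul_tsum_cesaroMean_rpow_lt hpq ha hne hsum)
end

section
/- If f ∈ S_1 (f(n) → +∞ and sup_n n|Δf(n)| = C < ∞), then the set {i f(n) : n ∈ ℕ} of eigenvalues cannot be decomposed into finitely many subsets Λ_1, …, Λ_K each satisfying inf over distinct pairs in Λ_k of |λ - μ| > 0; equivalently, the sequence (f(n)) does not split into finitely many uniformly separated subsequences. -/
open Filter Topology

/-!
For `N ≤ n ≤ 2N` the gaps satisfy `f (n + 1) - f n ≤ C / N`, so the `N + 1` distinct values
`f N, …, f (2N)` all lie in an interval of length `C`. A set whose points are `ε`-apart meets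
such an interval in at most `C / ε + 1` points, so `K` separated sets can cover at most a
bounded number of them, which fails once `N` is large.
-/

theorem Nat.abs_sub_lt_one_of_floor_eq_floor {K : Type*} [CommRing K] [LinearOrder K]
    [IsStrictOrderedRing K] [FloorSemiring K] {u v : K} (hu : 0 ≤ u) (hv : 0 ≤ v)
    (h : ⌊u⌋₊ = ⌊v⌋₊) : |u - v| < 1 := by
  have hu₁ := Nat.floor_le hu
  have hu₂ := Nat.lt_floor_add_one u
  have hv₁ := Nat.floor_le hv
  have hv₂ := Nat.lt_floor_add_one v
  rw [h] at hu₁ hu₂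
  rw [abs_sub_lt_iff]
  constructor <;> linarith

theorem Finset.card_le_of_pairwise_le_abs_sub {s : Finset ℝ} {a L ε : ℝ} (hε : 0 < ε)
    (hs : ↑s ⊆ Set.Icc a (a + L)) (hsep : (s : Set ℝ).Pairwise fun x y => ε ≤ |x - y|) :
    s.card ≤ ⌊L / ε⌋₊ + 1 := by
  let bucket : ℝ → ℕ := fun x => ⌊(x - a) / ε⌋₊
  have hoffset : ∀ x ∈ s, 0 ≤ (x - a) / ε ∧ (x - a) / ε ≤ L / ε := fun x hx => by
    obtain ⟨hax, hxa⟩ := hs hx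
    exact ⟨div_nonneg (by linarith) hε.le, div_le_div_of_nonneg_right (by linarith) hε.le⟩
  have hmaps : Set.MapsTo bucket s (Finset.range (⌊L / ε⌋₊ + 1)) := fun x hx => by
    simpa [Nat.lt_succ_iff, bucket] using Nat.floor_le_floor (hoffset x hx).2
  have hinj : Set.InjOn bucket s := by
    intro x hx y hy hxy
    by_contra hne
    have hclose := Nat.abs_sub_lt_one_of_floor_eq_floor (hoffset x hx).1 (hoffset y hy).1 hxy
    rw [← sub_div, sub_sub_sub_cancel_right, abs_div, abs_of_pos hε, div_lt_one hε] at hclose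
    exact (hsep hx hy hne).not_gt hclose
  simpa using Finset.card_le_card_of_injOn bucket hmaps hinj

theorem Finset.card_le_of_subset_iUnion_pairwise_le_abs_sub {ι : Type*} [Fintype ι]
    {Λ : ι → Set ℝ} {ε : ι → ℝ} (hε : ∀ i, 0 < ε i)
    (hsep : ∀ i, (Λ i).Pairwise fun x y => ε i ≤ |x - y|) {s : Finset ℝ} {a L : ℝ}
    (hs : ↑s ⊆ Set.Icc a (a + L)) (hsΛ : ↑s ⊆ ⋃ i, Λ i) :
    s.card ≤ ∑ i, (⌊L / ε i⌋₊ + 1) := by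
  classical
  have hcover : s ⊆ Finset.univ.biUnion fun i => s.filter (· ∈ Λ i) := fun x hx => by
    obtain ⟨i, hi⟩ := Set.mem_iUnion.mp (hsΛ hx)
    exact Finset.mem_biUnion.mpr ⟨i, Finset.mem_univ i, Finset.mem_filter.mpr ⟨hx, hi⟩⟩
  refine (Finset.card_le_card hcover).trans (Finset.card_biUnion_le.trans ?_)
  refine Finset.sum_le_sum fun i _ => Finset.card_le_of_pairwise_le_abs_sub (a := a) (hε i) ?_ ?_
  · exact (Finset.coe_subset.mpr (Finset.filter_subset _ s)).trans hs
  · exact (hsep i).mono fun x hx => (Finset.mem_filter.mp hx).2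

theorem le_add_mul_of_forall_sub_le {f : ℕ → ℝ} {d : ℝ} {N : ℕ}
    (h : ∀ n, N ≤ n → f (n + 1) - f n ≤ d) (k : ℕ) : f (N + k) ≤ f N + k * d := by
  induction k with
  | zero => simp
  | succ k ih =>
    have := h (N + k) (Nat.le_add_right N k)
    rw [← add_assoc]
    push_cast
    linarith

theorem le_add_of_natCast_mul_sub_le {f : ℕ → ℝ} {C : ℝ} (hC₀ : 0 ≤ C)
    (hC : ∀ n : ℕ, 1 ≤ n → (n : ℝ) * (f (n + 1) - f n) ≤ C) {N k : ℕ} (hN : 1 ≤ N)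
    (hk : k ≤ N) : f (N + k) ≤ f N + C := by
  have hN₀ : (0 : ℝ) < N := by exact_mod_cast hN
  have hgap : ∀ n, N ≤ n → f (n + 1) - f n ≤ C / N := fun n hn => by
    have hn₀ : (0 : ℝ) < n := hN₀.trans_le (by exact_mod_cast hn)
    calc f (n + 1) - f n ≤ C / n := by rw [le_div_iff₀' hn₀]; exact hC n (hN.trans hn)
      _ ≤ C / N := div_le_div_of_nonneg_left hC₀ hN₀ (by exact_mod_cast hn)
  calc f (N + k) ≤ f N + k * (C / N) := le_add_mul_of_forall_sub_le hgap k
    _ ≤ f N + N * (C / N) := by gcongr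
    _ = f N + C := by field_simp

theorem stmt4_general (f : ℕ → ℝ) (hmono : StrictMono f)
    (C : ℝ) (hC : ∀ n : ℕ, 1 ≤ n → (n : ℝ) * (f (n + 1) - f n) ≤ C) :
    ¬ ∃ (K : ℕ) (Λ : Fin K → Set ℝ),
      ({x : ℝ | ∃ n : ℕ, 1 ≤ n ∧ x = f n} = ⋃ k, Λ k) ∧
      ∀ k, ∃ ε > 0, ∀ x ∈ Λ k, ∀ y ∈ Λ k, x ≠ y → ε ≤ |x - y| := by
  rintro ⟨K, Λ, hcover, hsep⟩
  choose ε hε hsep using hsep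
  have hC₀ : 0 ≤ C := by
    have := hC 1 le_rfl
    have := hmono one_lt_two
    push_cast at *
    linarith
  set N := ∑ k, (⌊C / ε k⌋₊ + 1) + 1
  set s := (Finset.Icc N (2 * N)).image f
  have hcard : s.card = N + 1 := by
    rw [Finset.card_image_of_injective _ hmono.injective, Nat.card_Icc]
    omega
  have hs : ↑s ⊆ Set.Icc (f N) (f N + C) := by
    rintro _ hx
    obtain ⟨n, hn, rfl⟩ := Finset.mem_image.mp hx
    obtain ⟨hNn, hn2N⟩ := Finset.mem_Icc.mp hn
    obtain ⟨k, rfl⟩ := Nat.exists_eq_add_of_le hNn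
    exact ⟨hmono.monotone hNn, le_add_of_natCast_mul_sub_le hC₀ hC (by omega) (by omega)⟩
  have hsΛ : ↑s ⊆ ⋃ k, Λ k := by
    rintro _ hx
    obtain ⟨n, hn, rfl⟩ := Finset.mem_image.mp hx
    exact hcover ▸ ⟨n, by have := (Finset.mem_Icc.mp hn).1; omega, rfl⟩
  have := Finset.card_le_of_subset_iUnion_pairwise_le_abs_sub hε hsep hs hsΛ
  omega

/-- If `f` is strictly increasing, `f(n) → +∞` and `n·(f(n+1) - f(n))` is bounded,
then the set `{f(n) : n ≥ 1}` (equivalently, the set of eigenvalues `{i f(n)}`)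
cannot be decomposed into finitely many separated subsets. -/
theorem stmt4 (f : ℕ → ℝ) (hmono : StrictMono f) (hf : Tendsto f atTop atTop)
    (C : ℝ) (hC : ∀ n : ℕ, 1 ≤ n → (n : ℝ) * (f (n + 1) - f n) ≤ C) :
    ¬ ∃ (K : ℕ) (Λ : Fin K → Set ℝ),
      ({x : ℝ | ∃ n : ℕ, 1 ≤ n ∧ x = f n} = ⋃ k, Λ k) ∧
      ∀ k, ∃ ε > 0, ∀ x ∈ Λ k, ∀ y ∈ Λ k, x ≠ y → ε ≤ |x - y| :=
  stmt4_general f hmono C hC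
end

section
/- In ℓ₂(Δ), the standard unit vectors (e_n) are minimal but not uniformly minimal: for each n the distance from e_n to the closed span of {e_j : j ≠ n} is positive, but the infimum over n of these distances is zero. -/
/-! Every `y` in the span of the other unit vectors vanishes at `0` and `n`, so
`c = e_n - y` climbs from `0` to `1` in `n` steps; by Cauchy–Schwarz this costs
`‖Δc‖² ≥ 1/n`. Conversely the tent rising linearly to `1` at `n` and back to `0` at `2n`
has `‖Δ tent‖² = 2/n`, and `e_n - tent` lies in that span. Hence
`√(1/n) ≤ distToOthers n ≤ √(2/n)`. -/

open Filter Topology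

/-- The `ℓ₂(Δ)` norm of a sequence: `‖c‖ = (Σ_{n≥1} |c_n - c_{n-1}|²)^{1/2}` with the
convention `c 0 = 0`. -/
noncomputable def dN (c : ℕ → ℂ) : ℝ := Real.sqrt (∑' n : ℕ, ‖c (n + 1) - c n‖ ^ 2)

/-- The `n`-th standard unit sequence. -/
def eVec (j : ℕ) : ℕ → ℂ := fun n => if n = j then 1 else 0

/-- The distance in `ℓ₂(Δ)` from `e_n` to the (closed) linear span of the other
unit vectors `{e_j : j ≠ n, j ≥ 1}`. -/
noncomputable def distToOthers (n : ℕ) : ℝ :=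
  sInf {r : ℝ | ∃ y ∈ Submodule.span ℂ {c : ℕ → ℂ | ∃ j : ℕ, 1 ≤ j ∧ j ≠ n ∧ c = eVec j},
    r = dN (eVec n - y)}

open Finset

section Increments

variable {E : Type*} [SeminormedAddCommGroup E]

lemma norm_sub_sq_le_mul_sum_norm_sub_sq (c : ℕ → E) (n : ℕ) :
    ‖c n - c 0‖ ^ 2 ≤ n * ∑ k ∈ range n, ‖c (k + 1) - c k‖ ^ 2 := by
  calc ‖c n - c 0‖ ^ 2 = ‖∑ k ∈ range n, (c (k + 1) - c k)‖ ^ 2 := by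
        rw [sum_range_sub]
    _ ≤ (∑ k ∈ range n, ‖c (k + 1) - c k‖) ^ 2 :=
        pow_le_pow_left₀ (norm_nonneg _) (norm_sum_le _ _) 2
    _ ≤ n * ∑ k ∈ range n, ‖c (k + 1) - c k‖ ^ 2 := by
        simpa using sq_sum_le_card_mul_sum_sq (s := range n) (f := fun k => ‖c (k + 1) - c k‖)

lemma tsum_norm_sub_sq_eq_sum {c : ℕ → E} {M : ℕ} (hc : ∀ k, M ≤ k → c k = 0) :
    ∑' k, ‖c (k + 1) - c k‖ ^ 2 = ∑ k ∈ range M, ‖c (k + 1) - c k‖ ^ 2 := by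
  refine tsum_eq_sum fun k hk => ?_
  rw [mem_range, not_lt] at hk
  simp [hc k hk, hc (k + 1) (by omega)]

end Increments

abbrev othersSpan (n : ℕ) : Submodule ℂ (ℕ → ℂ) :=
  Submodule.span ℂ {c : ℕ → ℂ | ∃ j : ℕ, 1 ≤ j ∧ j ≠ n ∧ c = eVec j}

lemma apply_eq_zero_of_mem_othersSpan {n : ℕ} {y : ℕ → ℂ} (hy : y ∈ othersSpan n) :
    y 0 = 0 ∧ y n = 0 ∧ ∀ᶠ k in atTop, y k = 0 := by
  induction hy using Submodule.span_induction with
  | mem x hx =>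
    obtain ⟨j, hj, hjn, rfl⟩ := hx
    refine ⟨if_neg (by omega), if_neg hjn.symm, eventually_atTop.2 ⟨j + 1, fun k hk => ?_⟩⟩
    exact if_neg (by omega)
  | zero => exact ⟨rfl, rfl, .of_forall fun _ => rfl⟩
  | add x z _ _ hx hz =>
    exact ⟨by simp [hx.1, hz.1], by simp [hx.2.1, hz.2.1],
      (hx.2.2.and hz.2.2).mono fun k hk => by simp [hk.1, hk.2]⟩
  | smul a x _ hx =>
    exact ⟨by simp [hx.1], by simp [hx.2.1], hx.2.2.mono fun k hk => by simp [hk]⟩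

lemma mem_othersSpan {n N : ℕ} {f : ℕ → ℂ} (h0 : f 0 = 0) (hn : f n = 0)
    (hN : ∀ k, N ≤ k → f k = 0) : f ∈ othersSpan n := by
  have hf : f = ∑ j ∈ range N, f j • eVec j := by
    funext k
    rcases lt_or_ge k N with hk | hk
    · simp [eVec, hk]
    · simp [eVec, hN k hk, not_lt.2 hk]
  rw [hf]
  refine Submodule.sum_mem _ fun j _ => ?_
  rcases eq_or_ne j 0 with rfl | hj0
  · simp [h0]
  rcases eq_or_ne j n with rfl | hjn
  · simp [hn]
  exact Submodule.smul_mem _ _ (Submodule.subset_span ⟨j, by omega, hjn, rfl⟩)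

lemma distToOthers_nonneg (n : ℕ) : 0 ≤ distToOthers n :=
  Real.sInf_nonneg fun _ ⟨_, _, hr⟩ => hr ▸ Real.sqrt_nonneg _

lemma distToOthers_le {n : ℕ} {y : ℕ → ℂ} (hy : y ∈ othersSpan n) :
    distToOthers n ≤ dN (eVec n - y) :=
  csInf_le ⟨0, fun _ ⟨_, _, hr⟩ => hr ▸ Real.sqrt_nonneg _⟩ ⟨y, hy, rfl⟩

lemma le_distToOthers {n : ℕ} {r : ℝ} (h : ∀ y ∈ othersSpan n, r ≤ dN (eVec n - y)) :
    r ≤ distToOthers n :=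
  le_csInf ⟨_, 0, Submodule.zero_mem _, rfl⟩ fun _ ⟨y, hy, hr⟩ => hr ▸ h y hy

lemma sqrt_one_div_le_dN {c : ℕ → ℂ} {n M : ℕ} (h0 : c 0 = 0) (hn : c n = 1)
    (hM : ∀ k, M ≤ k → c k = 0) : Real.sqrt (1 / n) ≤ dN c := by
  have hnM : n < M := by
    by_contra! h
    simp [hM n h] at hn
  have hpos : (0 : ℝ) < n := by
    rcases Nat.eq_zero_or_pos n with rfl | h
    · simp [h0] at hn
    · exact_mod_cast h
  have key : 1 ≤ n * ∑ k ∈ range n, ‖c (k + 1) - c k‖ ^ 2 := by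
    simpa [hn, h0] using norm_sub_sq_le_mul_sum_norm_sub_sq c n
  refine Real.sqrt_le_sqrt ?_
  rw [tsum_norm_sub_sq_eq_sum hM, div_le_iff₀ hpos, mul_comm]
  refine key.trans (mul_le_mul_of_nonneg_left ?_ hpos.le)
  exact sum_le_sum_of_subset_of_nonneg (range_subset_range.2 hnM.le) fun _ _ _ => by positivity

lemma sqrt_one_div_le_distToOthers {n : ℕ} (hn : 1 ≤ n) :
    Real.sqrt (1 / n) ≤ distToOthers n := by
  refine le_distToOthers fun y hy => ?_
  obtain ⟨hy0, hyn, hyN⟩ := apply_eq_zero_of_mem_othersSpan hy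
  obtain ⟨N, hN⟩ := eventually_atTop.1 hyN
  refine sqrt_one_div_le_dN (M := max N (n + 1)) ?_ ?_ fun k hk => ?_
  · simp [eVec, hy0, show 0 ≠ n by omega]
  · simp [eVec, hyn]
  · simp [eVec, hN k (le_of_max_le_left hk), show k ≠ n by omega]

/-- Truncated subtraction makes the tent vanish for `k ≥ 2n`. -/
noncomputable def tent (n k : ℕ) : ℂ := (min k (2 * n - k) : ℕ) / n

lemma norm_tent_succ_sub_tent {n k : ℕ} (hk : k < 2 * n) :
    ‖tent n (k + 1) - tent n k‖ = 1 / n := by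
  have hstep : ((min (k + 1) (2 * n - (k + 1)) : ℕ) : ℤ) - (min k (2 * n - k) : ℕ) = 1 ∨
      ((min (k + 1) (2 * n - (k + 1)) : ℕ) : ℤ) - (min k (2 * n - k) : ℕ) = -1 := by
    omega
  rw [tent, tent, ← sub_div, norm_div, Complex.norm_natCast]
  generalize min (k + 1) (2 * n - (k + 1)) = a at hstep ⊢
  generalize min k (2 * n - k) = b at hstep ⊢
  rcases hstep with h | h
  · simp [show (a : ℂ) - b = 1 by exact_mod_cast h]
  · simp [show (a : ℂ) - b = -1 by exact_mod_cast h]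

lemma dN_tent (n : ℕ) : dN (tent n) = Real.sqrt (2 / n) := by
  have hzero : ∀ k, 2 * n ≤ k → tent n k = 0 := fun k hk => by
    simp [tent, Nat.sub_eq_zero_of_le hk]
  rw [dN, tsum_norm_sub_sq_eq_sum hzero,
    sum_congr rfl fun k hk => by rw [norm_tent_succ_sub_tent (mem_range.1 hk)]]
  rcases Nat.eq_zero_or_pos n with rfl | hn
  · simp
  · congr 1
    simp only [sum_const, card_range, nsmul_eq_mul]
    field_simp
    push_cast
    ring

lemma distToOthers_le_sqrt_two_div {n : ℕ} (hn : 1 ≤ n) :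
    distToOthers n ≤ Real.sqrt (2 / n) := by
  have hnC : (n : ℂ) ≠ 0 := Nat.cast_ne_zero.2 (by omega)
  have hmem : eVec n - tent n ∈ othersSpan n := by
    refine mem_othersSpan (N := 2 * n) ?_ ?_ fun k hk => ?_
    · simp [eVec, tent, show 0 ≠ n by omega]
    · simp [eVec, tent, show 2 * n - n = n by omega, hnC]
    · simp [eVec, tent, Nat.sub_eq_zero_of_le hk, show k ≠ n by omega]
  simpa [dN_tent] using distToOthers_le hmem

/-- In `ℓ₂(Δ)` the unit vectors `(e_n)_{n≥1}` are minimal (each distance to the closed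
span of the others is positive) but not uniformly minimal (the infimum of these
distances is zero). -/
theorem stmt7 :
    (∀ n : ℕ, 1 ≤ n → 0 < distToOthers n) ∧ (⨅ n : ℕ, distToOthers (n + 1)) = 0 := by
  refine ⟨fun n hn => ?_, ?_⟩
  · exact (Real.sqrt_pos.2 (one_div_pos.2 (Nat.cast_pos.2 hn))).trans_le
      (sqrt_one_div_le_distToOthers hn)
  have hbdd : BddBelow (Set.range fun n : ℕ => distToOthers (n + 1)) :=
    ⟨0, Set.forall_mem_range.2 fun n => distToOthers_nonneg _⟩
  have hupper : Tendsto (fun n : ℕ => Real.sqrt (2 / ((n + 1 : ℕ) : ℝ))) atTop (𝓝 0) := by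
    simpa using ((tendsto_const_div_atTop_nhds_zero_nat (2 : ℝ)).comp
      (tendsto_add_atTop_nat 1)).sqrt
  have hlim : Tendsto (fun n : ℕ => distToOthers (n + 1)) atTop (𝓝 0) :=
    squeeze_zero (fun n => distToOthers_nonneg _)
      (fun n => distToOthers_le_sqrt_two_div (Nat.le_add_left 1 n)) hupper
  exact le_antisymm (ge_of_tendsto' hlim fun n => ciInf_le hbdd n)
    (le_ciInf fun n => distToOthers_nonneg _)
end

section
/- Let f ∈ S_1 with C = sup_n n|Δf(n)| < ∞ and let a > 0. For any λ ∈ ℂ with inf_n |i f(n) − λ| ≥ a, the diagonal operator A(λ) on ℓ₂(Δ) defined by (A(λ)c)_n = c_n/(i f(n) − λ) is bounded with ‖A(λ)‖² ≤ 2/a² + 8C²/a⁴. -/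
/-! With `g n = ‖c (n+1) - c n‖`, the identity `y/q - x/p = (y - x)/q - x (q - p)/(p q)` bounds
the `n`-th difference of `c / d` by `g n / a + ‖c n‖ ‖Δd‖ / a²`. Since `‖c n‖ ≤ g 0 + ⋯ + g (n-1)`
and `n ‖Δd‖ ≤ C`, the second term is `C / a²` times the Cesàro mean of `g`. Squaring with
`(x + y)² ≤ 2x² + 2y²` and summing with the discrete Hardy inequality
`∑ (mean of g)² ≤ 4 ∑ g²` gives the constant `2/a² + 8C²/a⁴`. -/

open Filter Topology Finset

theorem sum_range_sq_mean_le (g : ℕ → ℝ) (N : ℕ) :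
    ∑ n ∈ range N, ((∑ k ∈ range (n + 1), g k) / (n + 1)) ^ 2 ≤ 4 * ∑ n ∈ range N, g n ^ 2 := by
  set A : ℕ → ℝ := fun n => (∑ k ∈ range n, g k) / n
  have hA : ∀ n : ℕ, n * A n = ∑ k ∈ range n, g k := by
    rintro (_ | n)
    · simp
    · exact mul_div_cancel₀ _ (by positivity)
  have hg : ∀ n : ℕ, g n = (n + 1) * A (n + 1) - n * A n := by
    intro n
    rw [hA, ← Nat.cast_succ, hA, sum_range_succ]
    ring
  -- `2 n A(n+1) A(n) ≤ n (A(n+1)² + A(n)²)` turns `A (n+1) * g n` into a telescoping bound.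
  have htele : ∀ n : ℕ,
      A (n + 1) ^ 2 - 2 * A (n + 1) * g n ≤ n * A n ^ 2 - (n + 1 : ℕ) * A (n + 1) ^ 2 := by
    intro n
    rw [hg n, Nat.cast_succ]
    nlinarith [mul_nonneg n.cast_nonneg (sq_nonneg (A (n + 1) - A n))]
  set X := ∑ n ∈ range N, A (n + 1) ^ 2
  set Y := ∑ n ∈ range N, g n ^ 2
  set Z := ∑ n ∈ range N, A (n + 1) * g n
  have hXZ : X ≤ 2 * Z := by
    have := sum_le_sum fun n (_ : n ∈ range N) => htele n
    rw [sum_range_sub' (fun n : ℕ => n * A n ^ 2)] at this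
    have hN : 0 ≤ (N : ℝ) * A N ^ 2 := by positivity
    simp only [sum_sub_distrib, mul_assoc, ← mul_sum, Nat.cast_zero, zero_mul] at this
    linarith
  have hZ : Z ^ 2 ≤ X * Y := sum_mul_sq_le_sq_mul_sq _ _ _
  have hX : 0 ≤ X := sum_nonneg fun _ _ => sq_nonneg _
  have hY : 0 ≤ Y := sum_nonneg fun _ _ => sq_nonneg _
  suffices X ≤ 4 * Y by simpa [X, A] using this
  nlinarith

theorem sum_range_sq_mean_le_tsum {g : ℕ → ℝ} (hg : Summable fun n => g n ^ 2) (N : ℕ) :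
    ∑ n ∈ range N, ((∑ k ∈ range n, g k) / n) ^ 2 ≤ 4 * ∑' n, g n ^ 2 :=
  calc ∑ n ∈ range N, ((∑ k ∈ range n, g k) / n) ^ 2
      ≤ ∑ n ∈ range (N + 1), ((∑ k ∈ range n, g k) / n) ^ 2 :=
        sum_le_sum_of_subset_of_nonneg (range_subset_range.2 N.le_succ) fun _ _ _ => sq_nonneg _
    _ = ∑ n ∈ range N, ((∑ k ∈ range (n + 1), g k) / (n + 1)) ^ 2 := by
        -- the `n = 0` term is `0 / 0 = 0`
        simp [sum_range_succ']
    _ ≤ 4 * ∑ n ∈ range N, g n ^ 2 := sum_range_sq_mean_le g N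
    _ ≤ 4 * ∑' n, g n ^ 2 := by
        gcongr
        exact hg.sum_le_tsum _ fun _ _ => sq_nonneg _

theorem summable_sq_mean {g : ℕ → ℝ} (hg : Summable fun n => g n ^ 2) :
    Summable fun n : ℕ => ((∑ k ∈ range n, g k) / n) ^ 2 :=
  summable_of_sum_range_le (fun _ => sq_nonneg _) (sum_range_sq_mean_le_tsum hg)

theorem tsum_sq_mean_le {g : ℕ → ℝ} (hg : Summable fun n => g n ^ 2) :
    ∑' n : ℕ, ((∑ k ∈ range n, g k) / n) ^ 2 ≤ 4 * ∑' n, g n ^ 2 :=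
  Real.tsum_le_of_sum_range_le (fun _ => sq_nonneg _) (sum_range_sq_mean_le_tsum hg)

section Diagonal

variable {𝕜 : Type*} [NormedField 𝕜]

theorem norm_div_sub_div_le {a : ℝ} (ha : 0 < a) {x y p q : 𝕜} (hp : a ≤ ‖p‖) (hq : a ≤ ‖q‖) :
    ‖y / q - x / p‖ ≤ ‖y - x‖ / a + ‖x‖ * ‖q - p‖ / a ^ 2 := by
  have hp0 : p ≠ 0 := norm_pos_iff.1 (ha.trans_le hp)
  have hq0 : q ≠ 0 := norm_pos_iff.1 (ha.trans_le hq)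
  have hsplit : y / q - x / p = (y - x) / q - x * (q - p) / (p * q) := by
    field_simp
    ring
  calc ‖y / q - x / p‖ ≤ ‖y - x‖ / ‖q‖ + ‖x‖ * ‖q - p‖ / (‖p‖ * ‖q‖) := by
        rw [hsplit, ← norm_div, ← norm_mul, ← norm_mul, ← norm_div]
        exact norm_sub_le _ _
    _ ≤ ‖y - x‖ / a + ‖x‖ * ‖q - p‖ / a ^ 2 := by
        rw [sq]
        gcongr

theorem norm_le_sum_range_norm_sub {E : Type*} [SeminormedAddCommGroup E] {c : ℕ → E}
    (h0 : c 0 = 0) (n : ℕ) : ‖c n‖ ≤ ∑ k ∈ range n, ‖c (k + 1) - c k‖ := by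
  simpa only [sum_range_sub, h0, sub_zero] using norm_sum_le (range n) fun k => c (k + 1) - c k

variable {a C : ℝ} {d c : ℕ → 𝕜}

theorem norm_div_sub_div_le_mean (ha : 0 < a) (hd : ∀ n : ℕ, 1 ≤ n → a ≤ ‖d n‖)
    (hC : ∀ n : ℕ, 2 ≤ n → n * ‖d n - d (n - 1)‖ ≤ C) (h0 : c 0 = 0) (n : ℕ) :
    ‖c (n + 1) / d (n + 1) - c n / d n‖ ≤
      ‖c (n + 1) - c n‖ / a + C * ((∑ k ∈ range n, ‖c (k + 1) - c k‖) / n) / a ^ 2 := by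
  rcases n with _ | n
  · simpa [h0] using div_le_div_of_nonneg_left (norm_nonneg (c 1)) ha (hd 1 le_rfl)
  set S := ∑ k ∈ range (n + 1), ‖c (k + 1) - c k‖
  have hΔd : ((n + 1 : ℕ) : ℝ) * ‖d (n + 2) - d (n + 1)‖ ≤ C := by
    have := hC (n + 2) (by omega)
    push_cast at this ⊢
    nlinarith [norm_nonneg (d (n + 2) - d (n + 1))]
  have hc : ‖c (n + 1)‖ * ‖d (n + 2) - d (n + 1)‖ ≤ C * (S / (n + 1 : ℕ)) := by
    calc ‖c (n + 1)‖ * ‖d (n + 2) - d (n + 1)‖ ≤ S * ‖d (n + 2) - d (n + 1)‖ := by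
          gcongr
          exact norm_le_sum_range_norm_sub h0 _
      _ = (S / (n + 1 : ℕ)) * ((n + 1 : ℕ) * ‖d (n + 2) - d (n + 1)‖) := by
          field_simp
      _ ≤ (S / (n + 1 : ℕ)) * C := by gcongr
      _ = C * (S / (n + 1 : ℕ)) := mul_comm _ _
  calc ‖c (n + 2) / d (n + 2) - c (n + 1) / d (n + 1)‖
      ≤ ‖c (n + 2) - c (n + 1)‖ / a + ‖c (n + 1)‖ * ‖d (n + 2) - d (n + 1)‖ / a ^ 2 :=
        norm_div_sub_div_le ha (hd _ (by omega)) (hd _ (by omega))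
    _ ≤ _ := by gcongr

theorem summable_sq_norm_sub_div_and_tsum_le (ha : 0 < a) (hd : ∀ n : ℕ, 1 ≤ n → a ≤ ‖d n‖)
    (hC : ∀ n : ℕ, 2 ≤ n → n * ‖d n - d (n - 1)‖ ≤ C) (h0 : c 0 = 0)
    (hc : Summable fun n => ‖c (n + 1) - c n‖ ^ 2) :
    (Summable fun n => ‖c (n + 1) / d (n + 1) - c n / d n‖ ^ 2) ∧
    ∑' n, ‖c (n + 1) / d (n + 1) - c n / d n‖ ^ 2
      ≤ (2 / a ^ 2 + 8 * C ^ 2 / a ^ 4) * ∑' n, ‖c (n + 1) - c n‖ ^ 2 := by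
  set g : ℕ → ℝ := fun n => ‖c (n + 1) - c n‖
  set A : ℕ → ℝ := fun n => (∑ k ∈ range n, g k) / n
  have hbound : ∀ n, ‖c (n + 1) / d (n + 1) - c n / d n‖ ^ 2 ≤
      2 / a ^ 2 * g n ^ 2 + 2 * C ^ 2 / a ^ 4 * A n ^ 2 := fun n =>
    calc ‖c (n + 1) / d (n + 1) - c n / d n‖ ^ 2 ≤ (g n / a + C * A n / a ^ 2) ^ 2 := by
          gcongr
          exact norm_div_sub_div_le_mean ha hd hC h0 n
      _ ≤ 2 * ((g n / a) ^ 2 + (C * A n / a ^ 2) ^ 2) := add_sq_le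
      _ = 2 / a ^ 2 * g n ^ 2 + 2 * C ^ 2 / a ^ 4 * A n ^ 2 := by ring
  have hA : Summable fun n => A n ^ 2 := summable_sq_mean hc
  have hmaj : Summable fun n => 2 / a ^ 2 * g n ^ 2 + 2 * C ^ 2 / a ^ 4 * A n ^ 2 :=
    (hc.mul_left _).add (hA.mul_left _)
  have hsum := hmaj.of_nonneg_of_le (fun _ => sq_nonneg _) hbound
  refine ⟨hsum, ?_⟩
  calc ∑' n, ‖c (n + 1) / d (n + 1) - c n / d n‖ ^ 2
      ≤ ∑' n, (2 / a ^ 2 * g n ^ 2 + 2 * C ^ 2 / a ^ 4 * A n ^ 2) :=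
        hsum.tsum_le_tsum hbound hmaj
    _ = 2 / a ^ 2 * ∑' n, g n ^ 2 + 2 * C ^ 2 / a ^ 4 * ∑' n, A n ^ 2 := by
        rw [(hc.mul_left _).tsum_add (hA.mul_left _), tsum_mul_left, tsum_mul_left]
    _ ≤ 2 / a ^ 2 * ∑' n, g n ^ 2 + 2 * C ^ 2 / a ^ 4 * (4 * ∑' n, g n ^ 2) := by
        gcongr
        exact tsum_sq_mean_le hc
    _ = (2 / a ^ 2 + 8 * C ^ 2 / a ^ 4) * ∑' n, g n ^ 2 := by ring

end Diagonal

theorem stmt9_general (f : ℕ → ℝ) (C a : ℝ) (ha : 0 < a) (lam : ℂ)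
    (hC : ∀ n : ℕ, 2 ≤ n → (n : ℝ) * |f n - f (n - 1)| ≤ C)
    (hlam : ∀ n : ℕ, 1 ≤ n → a ≤ ‖Complex.I * (f n : ℂ) - lam‖)
    (c : ℕ → ℂ) (h0 : c 0 = 0) (hc : Summable fun n => ‖c (n + 1) - c n‖ ^ 2) :
    (Summable fun n : ℕ =>
      ‖c (n + 1) / (Complex.I * (f (n + 1) : ℂ) - lam)
        - c n / (Complex.I * (f n : ℂ) - lam)‖ ^ 2) ∧
    ∑' n : ℕ, ‖c (n + 1) / (Complex.I * (f (n + 1) : ℂ) - lam)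
        - c n / (Complex.I * (f n : ℂ) - lam)‖ ^ 2
      ≤ (2 / a ^ 2 + 8 * C ^ 2 / a ^ 4) * ∑' n : ℕ, ‖c (n + 1) - c n‖ ^ 2 := by
  have hnorm : ∀ n, ‖(Complex.I * (f n : ℂ) - lam) - (Complex.I * (f (n - 1) : ℂ) - lam)‖
      = |f n - f (n - 1)| := fun n => by
    rw [sub_sub_sub_cancel_right, ← mul_sub, norm_mul, Complex.norm_I, one_mul,
      ← Complex.ofReal_sub, Complex.norm_real, Real.norm_eq_abs]
  exact summable_sq_norm_sub_div_and_tsum_le (d := fun n => Complex.I * (f n : ℂ) - lam) ha hlam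
    (fun n hn => (hnorm n).symm ▸ hC n hn) h0 hc

/-- Let `f ∈ S₁` (i.e. `f(n) → +∞` and `n|f(n) - f(n-1)| ≤ C`), `a > 0` and `λ ∈ ℂ`
with `|i f(n) - λ| ≥ a` for all `n ≥ 1`. Then the diagonal operator
`(A(λ)c)_n = c_n / (i f(n) - λ)` is bounded on `ℓ₂(Δ)` with
`‖A(λ)c‖² ≤ (2/a² + 8C²/a⁴) ‖c‖²`, where `‖c‖² = Σ_{n≥1}|c_n - c_{n-1}|²`
(convention `c 0 = 0`). -/
theorem stmt9 (f : ℕ → ℝ) (C a : ℝ) (ha : 0 < a) (lam : ℂ)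
    (hf : Tendsto f atTop atTop)
    (hC : ∀ n : ℕ, 2 ≤ n → (n : ℝ) * |f n - f (n - 1)| ≤ C)
    (hlam : ∀ n : ℕ, 1 ≤ n → a ≤ ‖Complex.I * (f n : ℂ) - lam‖)
    (c : ℕ → ℂ) (h0 : c 0 = 0) (hc : Summable fun n => ‖c (n + 1) - c n‖ ^ 2) :
    (Summable fun n : ℕ =>
      ‖c (n + 1) / (Complex.I * (f (n + 1) : ℂ) - lam)
        - c n / (Complex.I * (f n : ℂ) - lam)‖ ^ 2) ∧
    ∑' n : ℕ, ‖c (n + 1) / (Complex.I * (f (n + 1) : ℂ) - lam)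
        - c n / (Complex.I * (f n : ℂ) - lam)‖ ^ 2
      ≤ (2 / a ^ 2 + 8 * C ^ 2 / a ^ 4) * ∑' n : ℕ, ‖c (n + 1) - c n‖ ^ 2 :=
  stmt9_general f C a ha lam hC hlam c h0 hc
end

section
/- Let x* ∈ ℓ₂(Δ) be the constant sequence x*_n = 1 for all n (which lies in ℓ₂(Δ) since Δx* = e_1 ∈ ℓ₂). For any decomposition of ℕ into disjoint nonempty sets (A_m)_{m≥1} and any m, the element Σ_{j∈A_m} e_j (interpreted as the indicator sequence of A_m) has ℓ₂(Δ)-norm at least 1. Consequently P_m x* does not tend to 0 in norm, where P_m x* is the indicator sequence of A_m. -/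
open Filter Topology ENNReal NNReal

/-- The indicator sequence of a set `A ⊆ ℕ`. -/
noncomputable def ind (A : Set ℕ) : ℕ → ℂ := A.indicator fun _ => 1

/-- The squared `ℓ₂(Δ)` norm (in `ℝ≥0∞`, so that it equals `∞` when the difference
sequence is not square-summable). -/
noncomputable def sqNorm (c : ℕ → ℂ) : ℝ≥0∞ :=
  ∑' n : ℕ, (‖c (n + 1) - c n‖₊ : ℝ≥0∞) ^ 2

lemma sq_nnnorm_sub_le_sqNorm (c : ℕ → ℂ) (n : ℕ) :
    (‖c (n + 1) - c n‖₊ : ℝ≥0∞) ^ 2 ≤ sqNorm c :=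
  ENNReal.le_tsum n

lemma ind_succ_sub_ind_of_mem_iff {A : Set ℕ} {n : ℕ} (h : n + 1 ∈ A ↔ n ∈ A) :
    ind A (n + 1) - ind A n = 0 := by
  by_cases hn : n ∈ A
  · simp [ind, hn, h.mpr hn]
  · simp [ind, hn, mt h.mp hn]

lemma ind_succ_sub_ind_of_notMem_of_mem {A : Set ℕ} {n : ℕ} (hn : n ∉ A) (hn' : n + 1 ∈ A) :
    ind A (n + 1) - ind A n = 1 := by
  simp [ind, hn, hn']

/-- The predecessor of the least element of `A` is an entry point of `A`. -/
lemma Set.exists_notMem_succ_mem {A : Set ℕ} (hA : A.Nonempty) (h0 : 0 ∉ A) :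
    ∃ n, n ∉ A ∧ n + 1 ∈ A := by
  classical
  have hmin := Nat.find_spec hA
  obtain ⟨n, hn⟩ := Nat.exists_eq_succ_of_ne_zero fun h : Nat.find hA = 0 => h0 (h ▸ hmin)
  exact ⟨n, Nat.find_min hA (by omega), by rwa [hn] at hmin⟩

lemma one_le_sqNorm_ind {A : Set ℕ} (hA : A.Nonempty) (h0 : 0 ∉ A) : 1 ≤ sqNorm (ind A) := by
  obtain ⟨n, hn, hn'⟩ := A.exists_notMem_succ_mem hA h0
  simpa [ind_succ_sub_ind_of_notMem_of_mem hn hn'] using sq_nnnorm_sub_le_sqNorm (ind A) n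

lemma summable_sq_norm_ind_succ_sub_ind_setOf_one_le :
    Summable fun n : ℕ => ‖ind {m : ℕ | 1 ≤ m} (n + 1) - ind {m : ℕ | 1 ≤ m} n‖ ^ 2 := by
  refine summable_of_ne_finset_zero (s := {0}) fun n hn => ?_
  have hn : n + 1 ∈ {m : ℕ | 1 ≤ m} ↔ n ∈ {m : ℕ | 1 ≤ m} := by
    simp only [Finset.mem_singleton] at hn
    simp only [Set.mem_ofPred_eq]
    omega
  simp [ind_succ_sub_ind_of_mem_iff hn]

/-- The constant sequence `x* = (1,1,1,…)` lies in `ℓ₂(Δ)`; the indicator sequence of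
any nonempty `A ⊆ {n ≥ 1}` has `ℓ₂(Δ)`-norm at least `1`; consequently, for any
decomposition of `{n ≥ 1}` into disjoint nonempty sets `(A_m)`, the projections
`P_m x*` (the indicator sequences of `A_m`) do not tend to `0` in norm. -/
theorem stmt13 :
    (Summable fun n : ℕ => ‖ind {m : ℕ | 1 ≤ m} (n + 1) - ind {m : ℕ | 1 ≤ m} n‖ ^ 2) ∧
    (∀ A : Set ℕ, A.Nonempty → 0 ∉ A → 1 ≤ sqNorm (ind A)) ∧
    (∀ A : ℕ → Set ℕ, (∀ m, (A m).Nonempty) → Pairwise (Function.onFun Disjoint A) →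
      (⋃ m, A m) = {n : ℕ | 1 ≤ n} →
      ¬ Tendsto (fun m => sqNorm (ind (A m))) atTop (nhds 0)) := by
  refine ⟨summable_sq_norm_ind_succ_sub_ind_setOf_one_le, fun A => one_le_sqNorm_ind, ?_⟩
  intro A hA _ hcover hlim
  have h0 (m : ℕ) : 0 ∉ A m := fun hm => by
    simpa [hcover] using Set.mem_iUnion_of_mem m hm
  obtain ⟨m, hm⟩ := (hlim.eventually_lt_const zero_lt_one).exists
  exact (one_le_sqNorm_ind (hA m) (h0 m)).not_gt hm
end

section
/- If A generates a C₀-group (T(t))_{t∈ℝ} on a Banach space with ‖T(t)‖ ≤ p(|t|) for a polynomial p of degree k with positive coefficients, then for every a > 0 there is C > 0 such that ‖(A − λI)^{-1}‖ ≤ C/|Re λ|^{k+1} for 0 < |Re λ| < a, and ‖(A − λI)^{-1}‖ ≤ C for |Re λ| ≥ a. -/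
/-!
For `Re λ > 0` and `z = R y` we have `A z = y + λ z`, so `g s = e^{-λ s} T(s) z` has derivative
`e^{-λ s} T(s) y` and tends to `0` at `+∞` (polynomial growth against exponential decay).
Hence `z = -∫₀^∞ e^{-λ t} T(t) y dt` and
`‖R‖ ≤ ∫₀^∞ p(t) e^{-t Re λ} dt = ∑ⱼ cⱼ j! / (Re λ)^{j+1}`.
For `Re λ < 0` the same bound applies to the reversed group `T(-t)`, whose resolvent at `-λ`
is `-R`. The sum is at most `C / |Re λ|^{k+1}` for `|Re λ| < a` and is decreasing in `|Re λ|`.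
-/

open Filter Topology MeasureTheory Set

section PolynomialLaplace

variable {r : ℝ}

theorem integral_pow_mul_exp_neg_mul_Ioi (hr : 0 < r) (j : ℕ) :
    ∫ t in Ioi (0 : ℝ), t ^ j * Real.exp (-(r * t)) = j.factorial / r ^ (j + 1) := by
  have h := Real.integral_rpow_mul_exp_neg_mul_Ioi (a := (j + 1 : ℕ)) (by positivity) hr
  push_cast at h
  simp_rw [add_sub_cancel_right, Real.rpow_natCast, Real.Gamma_nat_eq_factorial] at h
  rw [h, ← Nat.cast_succ, Real.rpow_natCast, one_div, inv_pow, inv_mul_eq_div]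

theorem integrableOn_pow_mul_exp_neg_mul_Ioi (hr : 0 < r) (j : ℕ) :
    IntegrableOn (fun t : ℝ => t ^ j * Real.exp (-(r * t))) (Ioi 0) := by
  simpa [Real.rpow_natCast] using
    integrableOn_rpow_mul_exp_neg_mul_rpow (s := j) (p := 1) (by linarith [j.cast_nonneg (α := ℝ)])
      one_pos hr

variable (c : ℕ → ℝ) (k : ℕ)

theorem integrableOn_poly_mul_exp_neg_mul_Ioi (hr : 0 < r) :
    IntegrableOn (fun t : ℝ => (∑ j ∈ Finset.range (k + 1), c j * t ^ j) * Real.exp (-(r * t)))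
      (Ioi 0) := by
  simp_rw [Finset.sum_mul, mul_assoc]
  exact integrable_finsetSum _ fun j _ => (integrableOn_pow_mul_exp_neg_mul_Ioi hr j).const_mul _

theorem integral_poly_mul_exp_neg_mul_Ioi (hr : 0 < r) :
    ∫ t in Ioi (0 : ℝ), (∑ j ∈ Finset.range (k + 1), c j * t ^ j) * Real.exp (-(r * t)) =
      ∑ j ∈ Finset.range (k + 1), c j * (j.factorial / r ^ (j + 1)) := by
  simp_rw [Finset.sum_mul, mul_assoc]
  rw [integral_finsetSum _ fun j _ => (integrableOn_pow_mul_exp_neg_mul_Ioi hr j).const_mul _]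
  simp_rw [integral_const_mul, integral_pow_mul_exp_neg_mul_Ioi hr]

theorem tendsto_poly_mul_exp_neg_mul_atTop (hr : 0 < r) :
    Tendsto (fun t : ℝ => (∑ j ∈ Finset.range (k + 1), c j * t ^ j) * Real.exp (-(r * t)))
      atTop (𝓝 0) := by
  simp_rw [Finset.sum_mul, mul_assoc]
  have hj (j : ℕ) : Tendsto (fun t : ℝ => t ^ j * Real.exp (-(r * t))) atTop (𝓝 0) := by
    simpa [Real.rpow_natCast] using tendsto_rpow_mul_exp_neg_mul_atTop_nhds_zero j r hr
  simpa using tendsto_finsetSum _ fun j _ => (hj j).const_mul (c j)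

end PolynomialLaplace

theorem norm_le_integral_of_hasDerivAt_of_tendsto_zero {E : Type*} [NormedAddCommGroup E]
    [NormedSpace ℝ E] [CompleteSpace E] {g g' : ℝ → E} {φ : ℝ → ℝ}
    (hg : ∀ t, HasDerivAt g (g' t) t) (hφ : IntegrableOn φ (Ioi 0))
    (hg'φ : ∀ t, 0 < t → ‖g' t‖ ≤ φ t) (hlim : Tendsto g atTop (𝓝 0)) :
    ‖g 0‖ ≤ ∫ t in Ioi 0, φ t := by
  have hbound : ∀ᵐ t ∂(volume.restrict (Ioi (0 : ℝ))), ‖g' t‖ ≤ φ t :=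
    (ae_restrict_mem measurableSet_Ioi).mono hg'φ
  have hmeas : AEStronglyMeasurable g' (volume.restrict (Ioi (0 : ℝ))) := by
    rw [show g' = deriv g from funext fun t => (hg t).deriv.symm]
    exact aestronglyMeasurable_deriv g _
  have hint := integral_Ioi_of_hasDerivAt_of_tendsto' (fun t _ => hg t)
    (hφ.mono' hmeas hbound) hlim
  rw [← norm_neg, ← zero_sub, ← hint]
  exact norm_integral_le_of_norm_le hφ hbound

section Resolvent

variable {X : Type*} [NormedAddCommGroup X] [NormedSpace ℂ X] {T : ℝ → X →L[ℂ] X}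

theorem hasDerivAt_orbit (hTadd : ∀ t s, T (t + s) = (T t).comp (T s)) {z w : X}
    (hz : Tendsto (fun h : ℝ => h⁻¹ • (T h z - z)) (𝓝[≠] 0) (𝓝 w)) (t : ℝ) :
    HasDerivAt (fun s => T s z) (T t w) t := by
  rw [hasDerivAt_iff_tendsto_slope_zero]
  have hslope (h : ℝ) : h⁻¹ • (T (t + h) z - T t z) = T t (h⁻¹ • (T h z - z)) := by
    rw [hTadd, ContinuousLinearMap.comp_apply, ← map_sub, ContinuousLinearMap.map_smul_of_tower]
  simp only [hslope]
  exact ((T t).continuous.tendsto w).comp hz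

theorem hasDerivAt_exp_smul_orbit (hTadd : ∀ t s, T (t + s) = (T t).comp (T s)) {z w : X}
    (hz : Tendsto (fun h : ℝ => h⁻¹ • (T h z - z)) (𝓝[≠] 0) (𝓝 w)) (lam : ℂ) (t : ℝ) :
    HasDerivAt (fun s : ℝ => Complex.exp (-(lam * s)) • T s z)
      (Complex.exp (-(lam * t)) • T t (w - lam • z)) t := by
  have hexp : HasDerivAt (fun s : ℝ => Complex.exp (-(lam * s)))
      (Complex.exp (-(lam * t)) * -(lam * 1)) t :=
    ((hasDerivAt_id t).ofReal_comp.const_mul lam).neg.cexp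
  convert hexp.smul (hasDerivAt_orbit hTadd hz t) using 1
  · rfl
  rw [map_sub, (T t).map_smul]
  module

theorem tendsto_slope_comp_neg {x w : X}
    (hx : Tendsto (fun h : ℝ => h⁻¹ • (T h x - x)) (𝓝[≠] 0) (𝓝 w)) :
    Tendsto (fun h : ℝ => h⁻¹ • (T (-h) x - x)) (𝓝[≠] 0) (𝓝 (-w)) := by
  have hneg : Tendsto (fun h : ℝ => -h) (𝓝[≠] 0) (𝓝[≠] 0) := by
    simpa using continuous_neg.continuousWithinAt.tendsto_nhdsWithin (x := (0 : ℝ))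
      (s := {0}ᶜ) (t := {0}ᶜ) fun h hh => neg_ne_zero.2 hh
  convert (hx.comp hneg).neg using 2 with h
  simp [inv_neg, neg_smul]

variable [CompleteSpace X] {k : ℕ} {c : ℕ → ℝ}

theorem norm_resolvent_le_of_re_pos (hT0 : T 0 = 1)
    (hTadd : ∀ t s, T (t + s) = (T t).comp (T s)) (hc : ∀ j ≤ k, 0 ≤ c j)
    (hbound : ∀ t, 0 ≤ t → ‖T t‖ ≤ ∑ j ∈ Finset.range (k + 1), c j * t ^ j)
    {lam : ℂ} (hlam : 0 < lam.re) {R : X →L[ℂ] X}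
    (hR : ∀ y, Tendsto (fun h : ℝ => h⁻¹ • (T h (R y) - R y)) (𝓝[≠] 0) (𝓝 (y + lam • R y))) :
    ‖R‖ ≤ ∑ j ∈ Finset.range (k + 1), c j * (j.factorial / lam.re ^ (j + 1)) := by
  set p : ℝ → ℝ := fun t => ∑ j ∈ Finset.range (k + 1), c j * t ^ j
  have hsum_nonneg : 0 ≤ ∑ j ∈ Finset.range (k + 1), c j * (j.factorial / lam.re ^ (j + 1)) :=
    Finset.sum_nonneg fun j hj => mul_nonneg (hc j (Finset.mem_range_succ_iff.1 hj)) (by positivity)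
  have hdamped (t : ℝ) (ht : 0 ≤ t) (x : X) :
      ‖Complex.exp (-(lam * t)) • T t x‖ ≤ p t * Real.exp (-(lam.re * t)) * ‖x‖ := by
    rw [norm_smul, Complex.norm_exp, show (-(lam * t)).re = -(lam.re * t) by simp]
    calc Real.exp (-(lam.re * t)) * ‖T t x‖ ≤ Real.exp (-(lam.re * t)) * (p t * ‖x‖) := by
          gcongr
          exact (T t).le_of_opNorm_le (hbound t ht) x
      _ = p t * Real.exp (-(lam.re * t)) * ‖x‖ := by ring
  refine R.opNorm_le_bound hsum_nonneg fun y => ?_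
  have hderiv (t : ℝ) := hasDerivAt_exp_smul_orbit hTadd (hR y) lam t
  simp only [add_sub_cancel_right] at hderiv
  have hdecay : Tendsto (fun s : ℝ => Complex.exp (-(lam * s)) • T s (R y)) atTop (𝓝 0) := by
    refine squeeze_zero_norm' ((eventually_ge_atTop 0).mono fun s hs => hdamped s hs (R y)) ?_
    simpa using (tendsto_poly_mul_exp_neg_mul_atTop c k hlam).mul_const ‖R y‖
  calc ‖R y‖ ≤ ∫ t in Ioi 0, p t * Real.exp (-(lam.re * t)) * ‖y‖ := by
        simpa [hT0] using norm_le_integral_of_hasDerivAt_of_tendsto_zero hderiv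
          ((integrableOn_poly_mul_exp_neg_mul_Ioi c k hlam).mul_const _)
          (fun t ht => hdamped t ht.le y) hdecay
    _ = _ := by rw [integral_mul_const, integral_poly_mul_exp_neg_mul_Ioi c k hlam]

theorem norm_resolvent_le_of_re_ne_zero (hT0 : T 0 = 1)
    (hTadd : ∀ t s, T (t + s) = (T t).comp (T s)) (hc : ∀ j ≤ k, 0 ≤ c j)
    (hbound : ∀ t, ‖T t‖ ≤ ∑ j ∈ Finset.range (k + 1), c j * |t| ^ j)
    {lam : ℂ} (hlam : lam.re ≠ 0) {R : X →L[ℂ] X}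
    (hR : ∀ y, Tendsto (fun h : ℝ => h⁻¹ • (T h (R y) - R y)) (𝓝[≠] 0) (𝓝 (y + lam • R y))) :
    ‖R‖ ≤ ∑ j ∈ Finset.range (k + 1), c j * (j.factorial / |lam.re| ^ (j + 1)) := by
  rcases hlam.lt_or_gt with hneg | hpos
  · have hR' (y : X) : Tendsto (fun h : ℝ => h⁻¹ • (T (-h) ((-R) y) - (-R) y)) (𝓝[≠] 0)
        (𝓝 (y + (-lam) • (-R) y)) := by
      convert (tendsto_slope_comp_neg (hR y)).neg using 2 with h
      · simp [smul_sub]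
        abel
      · simp
    have key := norm_resolvent_le_of_re_pos (T := fun t => T (-t)) (by simpa using hT0)
      (fun t s => by simp only [neg_add, hTadd]) hc
      (fun t ht => by simpa [abs_of_nonneg ht] using hbound (-t)) (by simpa using hneg) hR'
    rwa [norm_neg, Complex.neg_re, ← abs_of_neg hneg] at key
  · rw [abs_of_pos hpos]
    exact norm_resolvent_le_of_re_pos hT0 hTadd hc
      (fun t ht => by simpa [abs_of_nonneg ht] using hbound t) hpos hR

end Resolvent

section Elementary

variable {c : ℕ → ℝ} {k : ℕ} {a r : ℝ}

theorem sum_mul_factorial_div_pow_le_div_pow (hc : ∀ j ≤ k, 0 ≤ c j) (hr : 0 < r) (hra : r ≤ a) :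
    ∑ j ∈ Finset.range (k + 1), c j * (j.factorial / r ^ (j + 1)) ≤
      (∑ j ∈ Finset.range (k + 1), c j * j.factorial * a ^ (k - j)) / r ^ (k + 1) := by
  rw [Finset.sum_div]
  refine Finset.sum_le_sum fun j hj => ?_
  have hjk := Finset.mem_range_succ_iff.1 hj
  have hsplit : r ^ (k + 1) = r ^ (j + 1) * r ^ (k - j) := by
    rw [← pow_add]
    congr 1
    omega
  have := hc j hjk
  calc c j * (j.factorial / r ^ (j + 1)) = c j * j.factorial * r ^ (k - j) / r ^ (k + 1) := by
        rw [hsplit]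
        field_simp
    _ ≤ c j * j.factorial * a ^ (k - j) / r ^ (k + 1) := by gcongr

theorem sum_mul_factorial_div_pow_le_of_le (hc : ∀ j ≤ k, 0 ≤ c j) (ha : 0 < a) (har : a ≤ r) :
    ∑ j ∈ Finset.range (k + 1), c j * (j.factorial / r ^ (j + 1)) ≤
      ∑ j ∈ Finset.range (k + 1), c j * (j.factorial / a ^ (j + 1)) := by
  refine Finset.sum_le_sum fun j hj => ?_
  have := hc j (Finset.mem_range_succ_iff.1 hj)
  gcongr

end Elementary

theorem stmt16_general {X : Type*} [NormedAddCommGroup X] [NormedSpace ℂ X] [CompleteSpace X]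
    (T : ℝ → X →L[ℂ] X) (hT0 : T 0 = 1)
    (hTadd : ∀ t s : ℝ, T (t + s) = (T t).comp (T s))
    (k : ℕ) (coef : ℕ → ℝ) (hcoef : ∀ j ≤ k, 0 < coef j)
    (hbound : ∀ t : ℝ, ‖T t‖ ≤ ∑ j ∈ Finset.range (k + 1), coef j * |t| ^ j)
    (dom : Set X) (A : X → X)
    (hA : ∀ x ∈ dom,
      Tendsto (fun t : ℝ => t⁻¹ • (T t x - x)) (nhdsWithin 0 {0}ᶜ) (nhds (A x))) :
    ∀ a : ℝ, 0 < a → ∃ C : ℝ, 0 < C ∧ ∀ (lam : ℂ) (R : X →L[ℂ] X),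
      ((∀ y : X, R y ∈ dom) ∧ (∀ y : X, A (R y) - lam • R y = y) ∧
        (∀ x ∈ dom, R (A x - lam • x) = x)) →
      (0 < |lam.re| ∧ |lam.re| < a → ‖R‖ ≤ C / |lam.re| ^ (k + 1)) ∧
      (a ≤ |lam.re| → ‖R‖ ≤ C) := by
  intro a ha
  have hc : ∀ j ≤ k, 0 ≤ coef j := fun j hj => (hcoef j hj).le
  set C₁ := ∑ j ∈ Finset.range (k + 1), coef j * j.factorial * a ^ (k - j)
  set C₂ := ∑ j ∈ Finset.range (k + 1), coef j * (j.factorial / a ^ (j + 1))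
  have hC₁ : 0 < C₁ := Finset.sum_pos (fun j hj => by
    have := hcoef j (Finset.mem_range_succ_iff.1 hj)
    positivity) Finset.nonempty_range_add_one
  have hC₂ : 0 ≤ C₂ := Finset.sum_nonneg fun j hj => by
    have := hc j (Finset.mem_range_succ_iff.1 hj)
    positivity
  refine ⟨C₁ + C₂, by linarith, fun lam R ⟨hRdom, hRright, _⟩ => ?_⟩
  have hR (y : X) : Tendsto (fun h : ℝ => h⁻¹ • (T h (R y) - R y)) (𝓝[≠] 0)
      (𝓝 (y + lam • R y)) := by
    simpa [← sub_eq_iff_eq_add.1 (hRright y)] using hA (R y) (hRdom y)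
  have hnorm (hre : 0 < |lam.re|) :=
    norm_resolvent_le_of_re_ne_zero hT0 hTadd hc hbound (abs_pos.1 hre) hR
  refine ⟨fun ⟨hre, hlt⟩ => ?_, fun hle => ?_⟩
  · calc ‖R‖ ≤ C₁ / |lam.re| ^ (k + 1) :=
          (hnorm hre).trans (sum_mul_factorial_div_pow_le_div_pow hc hre hlt.le)
      _ ≤ (C₁ + C₂) / |lam.re| ^ (k + 1) := by gcongr; linarith
  · calc ‖R‖ ≤ C₂ := (hnorm (ha.trans_le hle)).trans (sum_mul_factorial_div_pow_le_of_le hc ha hle)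
      _ ≤ C₁ + C₂ := by linarith

/-- If `A` generates a `C₀`-group `(T(t))_{t∈ℝ}` on a Banach space with
`‖T(t)‖ ≤ p(|t|)` for a polynomial `p` of degree `k` with positive coefficients, then
for every `a > 0` there is `C > 0` such that any resolvent operator
`R = (A - λ)⁻¹` satisfies `‖R‖ ≤ C/|Re λ|^{k+1}` for `0 < |Re λ| < a` and `‖R‖ ≤ C`
for `|Re λ| ≥ a`. The generator is described by its domain and the strong derivative
of the group at `0`. -/
theorem stmt16 {X : Type*} [NormedAddCommGroup X] [NormedSpace ℂ X] [CompleteSpace X]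
    (T : ℝ → X →L[ℂ] X) (hT0 : T 0 = 1)
    (hTadd : ∀ t s : ℝ, T (t + s) = (T t).comp (T s))
    (hcont : ∀ x : X, Continuous fun t : ℝ => T t x)
    (k : ℕ) (coef : ℕ → ℝ) (hcoef : ∀ j ≤ k, 0 < coef j)
    (hbound : ∀ t : ℝ, ‖T t‖ ≤ ∑ j ∈ Finset.range (k + 1), coef j * |t| ^ j)
    (dom : Set X) (A : X → X)
    (hdom : ∀ x : X, x ∈ dom ↔
      ∃ y : X, Tendsto (fun t : ℝ => t⁻¹ • (T t x - x)) (nhdsWithin 0 {0}ᶜ) (nhds y))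
    (hA : ∀ x ∈ dom,
      Tendsto (fun t : ℝ => t⁻¹ • (T t x - x)) (nhdsWithin 0 {0}ᶜ) (nhds (A x))) :
    ∀ a : ℝ, 0 < a → ∃ C : ℝ, 0 < C ∧ ∀ (lam : ℂ) (R : X →L[ℂ] X),
      ((∀ y : X, R y ∈ dom) ∧ (∀ y : X, A (R y) - lam • R y = y) ∧
        (∀ x ∈ dom, R (A x - lam • x) = x)) →
      (0 < |lam.re| ∧ |lam.re| < a → ‖R‖ ≤ C / |lam.re| ^ (k + 1)) ∧
      (a ≤ |lam.re| → ‖R‖ ≤ C) :=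
  stmt16_general T hT0 hTadd k coef hcoef hbound dom A hA
end

section
/- Let H be a Hilbert space with a Schauder basis (φ_n) that is bounded (0 < inf‖φ_n‖ ≤ sup‖φ_n‖ < ∞) but is not a Riesz basis. Define A(Σ c_n φ_n) = −Σ n c_n φ_n on its natural domain. Then A generates a C₀-semigroup (given by e^{At}x = Σ e^{−nt} c_n φ_n for t ≥ 0), the spectrum of A is the set {−n : n ∈ ℕ} of simple eigenvalues with eigenvectors φ_n, and A does not generate a C₀-group. -/
open Filter Topology Finset BoundedContinuousFunction

/-!
Uniqueness of expansions makes the partial-sum maps `P_N` well defined and linear; a closed-graph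
argument for `x ↦ (P_N x)_N ∈ ℓ^∞(H)` shows they are bounded, so `(φ_n)` is a Schauder basis with
continuous coordinate functionals. Summation by parts then turns every coefficient sequence `μ`
of bounded variation into a bounded diagonal operator
`Σ μ_n c_n φ_n = (lim μ) x - Σ (μ_{n+1} - μ_n) P_{n+1} x`.
For `t ≥ 0` the sequence `e^{-nt}` is decreasing, so these operators are uniformly bounded and
strongly continuous (by density of finite expansions), giving the semigroup; the resolvent at
`λ ∉ {-n}` is the diagonal operator with entries `(-n - λ)⁻¹`, whose differences are `O(1/n²)`.
A group would provide a bounded inverse of `e^{A}`,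
whose eigenvalues `e^{n}` are unbounded.
-/

theorem tendsto_limUnder_of_summable_norm_sub {𝕜 : Type*} [NormedField 𝕜] [CompleteSpace 𝕜]
    {μ : ℕ → 𝕜} (hμ : Summable fun n => ‖μ (n + 1) - μ n‖) :
    Tendsto μ atTop (𝓝 (limUnder atTop μ)) :=
  (cauchySeq_of_summable_dist (by simpa [dist_eq_norm'] using hμ)).tendsto_limUnder

theorem Antitone.sum_range_norm_sub {u : ℕ → ℝ} (hu : Antitone u) (N : ℕ) :
    ∑ n ∈ range N, ‖u (n + 1) - u n‖ = u 0 - u N := by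
  simp_rw [Real.norm_eq_abs, abs_of_nonpos (sub_nonpos.2 (hu (Nat.le_succ _))), neg_sub]
  exact sum_range_sub' u N

theorem Antitone.summable_norm_sub {u : ℕ → ℝ} (hu : Antitone u) (h0 : ∀ n, 0 ≤ u n) :
    Summable fun n => ‖u (n + 1) - u n‖ :=
  summable_of_sum_range_le (fun _ => norm_nonneg _) fun N => by
    linarith [hu.sum_range_norm_sub N, h0 N]

theorem Antitone.tsum_norm_sub_le {u : ℕ → ℝ} (hu : Antitone u) (h0 : ∀ n, 0 ≤ u n) :
    ∑' n, ‖u (n + 1) - u n‖ ≤ u 0 :=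
  Real.tsum_le_of_sum_range_le (fun _ => norm_nonneg _) fun N => by
    linarith [hu.sum_range_norm_sub N, h0 N]

theorem ContinuousLinearMap.tendstoUniformlyOn_apply_of_norm_le
    {𝕜 α E F : Type*} [NontriviallyNormedField 𝕜] [NormedAddCommGroup E] [NormedSpace 𝕜 E]
    [NormedAddCommGroup F] [NormedSpace 𝕜 F] {T : α → E →L[𝕜] F} {s : Set α} {C : ℝ}
    (hT : ∀ t ∈ s, ‖T t‖ ≤ C) {ι : Type*} {l : Filter ι} {x : ι → E} {x₀ : E}
    (hx : Tendsto x l (𝓝 x₀)) :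
    TendstoUniformlyOn (fun i t => T t (x i)) (fun t => T t x₀) l s := by
  rw [Metric.tendstoUniformlyOn_iff]
  intro ε hε
  have hC : 0 < max C 0 + 1 := by positivity
  filter_upwards [Metric.tendsto_nhds.mp hx (ε / (max C 0 + 1)) (by positivity)] with i hi t ht
  calc dist (T t x₀) (T t (x i)) ≤ ‖T t‖ * dist x₀ (x i) := by
        rw [dist_eq_norm, dist_eq_norm, ← map_sub]; exact (T t).le_opNorm _
    _ ≤ (max C 0 + 1) * dist (x i) x₀ := by
        rw [dist_comm]; gcongr; exact (hT t ht).trans (by linarith [le_max_left C 0])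
    _ < (max C 0 + 1) * (ε / (max C 0 + 1)) := by gcongr
    _ = ε := by field_simp

theorem ContinuousLinearMap.one_le_norm_mul_opNorm_of_comp_eq_one
    {𝕜 E : Type*} [NontriviallyNormedField 𝕜] [NormedAddCommGroup E] [NormedSpace 𝕜 E]
    {T S : E →L[𝕜] E} (h : T.comp S = 1) {v : E} (hv : v ≠ 0) {c : 𝕜} (hS : S v = c • v) :
    1 ≤ ‖c‖ * ‖T‖ := by
  have hTv : v = c • T v := by simpa [hS] using (congrArg (· v) h).symm
  have : 1 * ‖v‖ ≤ (‖c‖ * ‖T‖) * ‖v‖ :=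
    calc 1 * ‖v‖ = ‖c‖ * ‖T v‖ := by rw [one_mul, ← norm_smul, ← hTv]
      _ ≤ ‖c‖ * (‖T‖ * ‖v‖) := by gcongr; exact T.le_opNorm v
      _ = (‖c‖ * ‖T‖) * ‖v‖ := by ring
  exact le_of_mul_le_mul_right this (norm_pos_iff.mpr hv)

section UniqueExpansions

variable {𝕜 E : Type*} [NontriviallyNormedField 𝕜] [NormedAddCommGroup E] [NormedSpace 𝕜 E]

theorem tendsto_sum_single_smul (e : ℕ → E) (j : ℕ) (a : 𝕜) :
    Tendsto (fun N => ∑ n ∈ range N, (Pi.single j a : ℕ → 𝕜) n • e n) atTop (𝓝 (a • e j)) := by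
  refine tendsto_atTop_of_eventually_const (i₀ := j + 1) fun N hN => ?_
  rw [sum_eq_single_of_mem j (mem_range.2 (by omega)) fun n _ hn => by simp [hn]]
  simp

variable (𝕜) in
def HasUniqueExpansions (e : ℕ → E) : Prop :=
  ∀ x : E, ∃! c : ℕ → 𝕜, Tendsto (fun N => ∑ n ∈ range N, c n • e n) atTop (𝓝 x)

namespace HasUniqueExpansions

variable {e : ℕ → E}

theorem ne_zero (he : HasUniqueExpansions 𝕜 e) (n : ℕ) : e n ≠ 0 := by
  intro hn
  have h := (he 0).unique (by simpa [hn] using tendsto_sum_single_smul e n (1 : 𝕜))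
    (y₂ := 0) (by simp)
  simpa using congrFun h n

variable (he : HasUniqueExpansions 𝕜 e)

noncomputable def coeff : E →ₗ[𝕜] ℕ → 𝕜 where
  toFun x := (he x).exists.choose
  map_add' x y := (he (x + y)).unique (he (x + y)).exists.choose_spec
    (by simpa only [Pi.add_apply, add_smul, sum_add_distrib] using
      (he x).exists.choose_spec.add (he y).exists.choose_spec)
  map_smul' a x := (he (a • x)).unique (he (a • x)).exists.choose_spec
    (by simpa only [Pi.smul_apply, smul_eq_mul, mul_smul, ← smul_sum, RingHom.id_apply] using
      (he x).exists.choose_spec.const_smul a)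

theorem tendsto_sum_coeff (x : E) :
    Tendsto (fun N => ∑ n ∈ range N, he.coeff x n • e n) atTop (𝓝 x) :=
  (he x).exists.choose_spec

theorem coeff_eq {c : ℕ → 𝕜} {x : E}
    (h : Tendsto (fun N => ∑ n ∈ range N, c n • e n) atTop (𝓝 x)) : he.coeff x = c :=
  (he x).unique (he.tendsto_sum_coeff x) h

noncomputable def partialSums : E →ₗ[𝕜] ℕ →ᵇ E where
  toFun x := .ofNormedAddCommGroupDiscrete (fun N => ∑ n ∈ range N, he.coeff x n • e n)
    _ fun N => (he.tendsto_sum_coeff x).norm.bddAbove_range.choose_spec ⟨N, rfl⟩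
  map_add' x y := by ext N; simp [add_smul, sum_add_distrib]
  map_smul' a x := by ext N; simp [mul_smul, smul_sum]

theorem partialSums_apply (x : E) (N : ℕ) :
    he.partialSums x N = ∑ n ∈ range N, he.coeff x n • e n := rfl

theorem partialSums_succ_sub (x : E) (N : ℕ) :
    he.partialSums x (N + 1) - he.partialSums x N = he.coeff x N • e N := by
  simp [partialSums_apply, sum_range_succ]

variable [CompleteSpace 𝕜] [CompleteSpace E]

theorem continuous_partialSums : Continuous he.partialSums := by
  refine he.partialSums.continuous_of_seq_closed_graph fun x x₀ u hx hu => ?_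
  have hpt (N : ℕ) : Tendsto (fun k => he.partialSums (x k) N) atTop (𝓝 (u N)) :=
    ((continuous_eval_const N).tendsto u).comp hu
  have hu₀ : u 0 = 0 := tendsto_nhds_unique (hpt 0) (by simp [partialSums_apply])
  -- each increment of `u` is a limit of multiples of `e N`, and those form a closed line
  have hstep (N : ℕ) : ∃ a : 𝕜, a • e N = u (N + 1) - u N := by
    have hlim := (hpt (N + 1)).sub (hpt N)
    simp only [partialSums_succ_sub] at hlim
    exact (isClosedEmbedding_smul_left (he.ne_zero N)).isClosed_range.mem_of_tendsto hlim
      (Eventually.of_forall fun k => ⟨he.coeff (x k) N, rfl⟩)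
  choose a ha using hstep
  have hua (N : ℕ) : u N = ∑ n ∈ range N, a n • e n := by
    simp only [ha, sum_range_sub, hu₀, sub_zero]
  have hux : Tendsto u atTop (𝓝 x₀) :=
    (BoundedContinuousFunction.tendsto_iff_tendstoUniformly.mp hu).tendsto_of_eventually_tendsto
      (Eventually.of_forall fun k => he.tendsto_sum_coeff (x k)) hx
  ext N
  rw [partialSums_apply, he.coeff_eq (hux.congr hua), hua]

theorem continuous_coeff_apply (n : ℕ) : Continuous fun x => he.coeff x n := by
  rw [(isClosedEmbedding_smul_left (he.ne_zero n)).continuous_iff]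
  simp only [Function.comp_def, ← partialSums_succ_sub]
  exact ((continuous_eval_const _).comp he.continuous_partialSums).sub
    ((continuous_eval_const _).comp he.continuous_partialSums)

noncomputable def schauderBasis : SchauderBasis 𝕜 E where
  basis := e
  coord n := ⟨LinearMap.proj n ∘ₗ he.coeff, he.continuous_coeff_apply n⟩
  ortho i j := by
    change he.coeff (e j) i = _
    rw [he.coeff_eq (by simpa using tendsto_sum_single_smul e j (1 : 𝕜))]
    simp [Pi.single_apply]
  expansion x := by
    rw [HasSum, SummationFilter.conditional_filter_eq_map_range, tendsto_map'_iff]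
    exact he.tendsto_sum_coeff x

end HasUniqueExpansions

end UniqueExpansions

namespace SchauderBasis

section Multiplier

variable {𝕜 E : Type*} [NontriviallyNormedField 𝕜] [NormedAddCommGroup E] [NormedSpace 𝕜 E]
  (b : SchauderBasis 𝕜 E)

theorem coord_sum_smul (c : ℕ → 𝕜) (N k : ℕ) :
    b.coord k (∑ n ∈ range N, c n • b n) = if k < N then c k else 0 := by
  simp [b.ortho, Pi.single_apply]

theorem tendsto_sum_smul_iff {c : ℕ → 𝕜} {x : E} :
    Tendsto (fun N => ∑ n ∈ range N, c n • b n) atTop (𝓝 x) ↔ c = fun n => b.coord n x := by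
  refine ⟨fun h => funext fun n => ?_, ?_⟩
  · refine tendsto_nhds_unique ?_ (((b.coord n).continuous.tendsto x).comp h)
    exact tendsto_atTop_of_eventually_const (i₀ := n + 1) fun N hN => by
      rw [Function.comp_apply, coord_sum_smul, if_pos (by omega)]
  · rintro rfl
    simpa using b.tendsto_proj x

theorem ext_coord {x y : E} (h : ∀ n, b.coord n x = b.coord n y) : x = y :=
  tendsto_nhds_unique (b.tendsto_proj x) (by simpa [h] using b.tendsto_proj y)

theorem coord_proj (N k : ℕ) (x : E) :
    b.coord k (b.proj N x) = if k < N then b.coord k x else 0 := by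
  rw [proj_apply, coord_sum_smul]

theorem eq_coord_smul_of_diagonal_eigen {d : ℕ → 𝕜} (hd : Function.Injective d) {x : E} {n : ℕ}
    (hx : ∀ k, b.coord k (d n • x) = d k * b.coord k x) : x = b.coord n x • b n :=
  b.ext_coord fun k => by
    by_cases hk : k = n
    · simp [hk, b.ortho]
    · have hdk := hx k
      rw [map_smul, smul_eq_mul] at hdk
      simp [(mul_eq_mul_right_iff.mp hdk).resolve_left (hd.ne hk).symm, b.ortho, hk]

-- Summation by parts form of `x ↦ ∑ μ n • coord n x • b n`; it is only meaningful (and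
-- `limUnder` only non-junk) when `μ` has bounded variation.
noncomputable def multiplier (μ : ℕ → 𝕜) : E →L[𝕜] E :=
  limUnder atTop μ • 1 - ∑' n, (μ (n + 1) - μ n) • b.proj (n + 1)

theorem summable_sub_smul_proj [CompleteSpace E] {μ : ℕ → 𝕜}
    (hμ : Summable fun n => ‖μ (n + 1) - μ n‖) :
    Summable fun n => (μ (n + 1) - μ n) • b.proj (n + 1) := by
  obtain ⟨C, hC⟩ := b.exists_norm_proj_le
  refine .of_norm_bounded (hμ.mul_right C) fun n => ?_
  rw [norm_smul]
  gcongr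
  exact hC _

variable [CompleteSpace 𝕜]

theorem norm_multiplier_le {μ : ℕ → 𝕜} (hμ : Summable fun n => ‖μ (n + 1) - μ n‖) {B C : ℝ}
    (hB : ∀ n, ‖μ n‖ ≤ B) (hC : ∀ n, ‖b.proj n‖ ≤ C) :
    ‖b.multiplier μ‖ ≤ B + (∑' n, ‖μ (n + 1) - μ n‖) * C := by
  have hlim : ‖limUnder atTop μ‖ ≤ B :=
    le_of_tendsto' (tendsto_limUnder_of_summable_norm_sub hμ).norm hB
  have hterm (n : ℕ) : ‖(μ (n + 1) - μ n) • b.proj (n + 1)‖ ≤ ‖μ (n + 1) - μ n‖ * C := by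
    rw [norm_smul]
    gcongr
    exact hC _
  calc ‖b.multiplier μ‖
      ≤ ‖limUnder atTop μ • (1 : E →L[𝕜] E)‖ + ‖∑' n, (μ (n + 1) - μ n) • b.proj (n + 1)‖ :=
        norm_sub_le _ _
    _ ≤ ‖limUnder atTop μ‖ * 1 + ∑' n, ‖μ (n + 1) - μ n‖ * C := by
        gcongr
        · exact (norm_smul_le _ _).trans (by gcongr; exact ContinuousLinearMap.norm_id_le)
        · exact tsum_of_norm_bounded (hμ.mul_right C).hasSum hterm
    _ ≤ B + (∑' n, ‖μ (n + 1) - μ n‖) * C := by rw [mul_one, tsum_mul_right]; gcongr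

variable [CompleteSpace E]

theorem tendsto_sum_mul_coord_smul {μ : ℕ → 𝕜} (hμ : Summable fun n => ‖μ (n + 1) - μ n‖)
    (x : E) :
    Tendsto (fun N => ∑ n ∈ range N, (μ n * b.coord n x) • b n) atTop
      (𝓝 (b.multiplier μ x)) := by
  have hparts (N : ℕ) : ∑ n ∈ range N, (μ n * b.coord n x) • b n =
      μ (N - 1) • b.proj N x - ∑ n ∈ range (N - 1), (μ (n + 1) - μ n) • b.proj (n + 1) x := by
    simpa [mul_smul] using sum_range_by_parts μ (fun n => b.coord n x • b n) N
  have hlim := ((tendsto_limUnder_of_summable_norm_sub hμ).comp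
    (tendsto_sub_atTop_nat 1)).smul (b.tendsto_proj x)
  have hsum := (((b.summable_sub_smul_proj hμ).hasSum.mapL
    (ContinuousLinearMap.apply 𝕜 E x)).tendsto_sum_nat).comp (tendsto_sub_atTop_nat 1)
  simp only [hparts]
  exact hlim.sub hsum

theorem coord_multiplier {μ : ℕ → 𝕜} (hμ : Summable fun n => ‖μ (n + 1) - μ n‖) (x : E)
    (n : ℕ) : b.coord n (b.multiplier μ x) = μ n * b.coord n x :=
  (congrFun (b.tendsto_sum_smul_iff.mp (b.tendsto_sum_mul_coord_smul hμ x)) n).symm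

theorem multiplier_apply_proj {μ : ℕ → 𝕜} (hμ : Summable fun n => ‖μ (n + 1) - μ n‖) (N : ℕ)
    (x : E) : b.multiplier μ (b.proj N x) = ∑ n ∈ range N, (μ n * b.coord n x) • b n :=
  b.ext_coord fun k => by
    rw [coord_multiplier b hμ, coord_proj, coord_sum_smul]
    split_ifs <;> simp

theorem multiplier_apply_basis {μ : ℕ → 𝕜} (hμ : Summable fun n => ‖μ (n + 1) - μ n‖) (n : ℕ) :
    b.multiplier μ (b n) = μ n • b n :=
  b.ext_coord fun k => by
    rw [coord_multiplier b hμ, map_smul, b.ortho]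
    by_cases hk : k = n <;> simp [hk]

theorem multiplier_one : b.multiplier (1 : ℕ → 𝕜) = 1 := by
  ext x
  exact b.ext_coord fun n => by simp [b.coord_multiplier (μ := 1) (by simp)]

theorem multiplier_comp {μ ν : ℕ → 𝕜} (hμ : Summable fun n => ‖μ (n + 1) - μ n‖)
    (hν : Summable fun n => ‖ν (n + 1) - ν n‖)
    (hμν : Summable fun n => ‖(μ * ν) (n + 1) - (μ * ν) n‖) :
    (b.multiplier μ).comp (b.multiplier ν) = b.multiplier (μ * ν) := by
  ext x
  refine b.ext_coord fun n => ?_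
  rw [ContinuousLinearMap.comp_apply, b.coord_multiplier hμ, b.coord_multiplier hν,
    b.coord_multiplier hμν, Pi.mul_apply, mul_assoc]

theorem exists_diagonal_resolvent {d : ℕ → 𝕜} {l : 𝕜} (hl : ∀ n, d n ≠ l)
    (hμ : Summable fun n => ‖(d (n + 1) - l)⁻¹ - (d n - l)⁻¹‖) :
    ∃ R : E →L[𝕜] E, (∀ z n, b.coord n (z + l • R z) = d n * b.coord n (R z)) ∧
      ∀ x y, (∀ n, b.coord n y = d n * b.coord n x) → R (y - l • x) = x := by
  have hcoord := b.coord_multiplier (μ := fun n => (d n - l)⁻¹) hμ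
  refine ⟨b.multiplier fun n => (d n - l)⁻¹, fun z n => ?_, fun x y hxy => b.ext_coord fun n => ?_⟩
  · rw [map_add, map_smul, hcoord, smul_eq_mul]
    linear_combination -b.coord n z * mul_inv_cancel₀ (sub_ne_zero.mpr (hl n))
  · rw [hcoord, map_sub, map_smul, hxy, smul_eq_mul]
    linear_combination b.coord n x * mul_inv_cancel₀ (sub_ne_zero.mpr (hl n))

end Multiplier

end SchauderBasis

theorem norm_neg_natCast_add_one_sub_ge (l : ℂ) (n : ℕ) :
    (n : ℝ) + 1 - ‖l‖ ≤ ‖-((n : ℂ) + 1) - l‖ := by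
  have hn : ‖(n : ℂ) + 1‖ = n + 1 := by exact_mod_cast Complex.norm_natCast (n + 1)
  have := norm_sub_norm_le ((n : ℂ) + 1) (-l)
  rw [norm_neg, sub_neg_eq_add, hn] at this
  rwa [show -((n : ℂ) + 1) - l = -((n + 1) + l) by ring, norm_neg]

theorem summable_norm_inv_neg_natCast_add_one_sub (l : ℂ) :
    Summable fun n : ℕ => ‖(-(((n + 1 : ℕ) : ℂ) + 1) - l)⁻¹ - (-((n : ℂ) + 1) - l)⁻¹‖ := by
  refine .of_norm_bounded_eventually_nat (g := fun n : ℕ => 4 * ((n : ℝ) ^ 2)⁻¹)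
    ((Real.summable_nat_pow_inv.mpr one_lt_two).mul_left 4) ?_
  filter_upwards [eventually_ge_atTop ⌈2 * ‖l‖⌉₊, eventually_ge_atTop 1] with n hl hn
  have hl' : 2 * ‖l‖ ≤ n := Nat.ceil_le.mp hl
  have hn1 : (1 : ℝ) ≤ n := by exact_mod_cast hn
  have ha : (n : ℝ) / 2 ≤ ‖-(((n + 1 : ℕ) : ℂ) + 1) - l‖ := by
    linarith [norm_neg_natCast_add_one_sub_ge l (n + 1),
      show ((n + 1 : ℕ) : ℝ) = n + 1 by push_cast; ring]
  have hb : (n : ℝ) / 2 ≤ ‖-((n : ℂ) + 1) - l‖ := by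
    linarith [norm_neg_natCast_add_one_sub_ge l n]
  have ha0 : -(((n + 1 : ℕ) : ℂ) + 1) - l ≠ 0 := norm_pos_iff.mp (by linarith)
  have hb0 : -((n : ℂ) + 1) - l ≠ 0 := norm_pos_iff.mp (by linarith)
  rw [norm_norm, inv_sub_inv' ha0 hb0, norm_mul, norm_mul, norm_inv, norm_inv,
    show -((n : ℂ) + 1) - l - (-(((n + 1 : ℕ) : ℂ) + 1) - l) = 1 by push_cast; ring, norm_one,
    mul_one]
  calc ‖-(((n + 1 : ℕ) : ℂ) + 1) - l‖⁻¹ * ‖-((n : ℂ) + 1) - l‖⁻¹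
      ≤ ((n : ℝ) / 2)⁻¹ * ((n : ℝ) / 2)⁻¹ := by gcongr
    _ = 4 * ((n : ℝ) ^ 2)⁻¹ := by field_simp; ring

noncomputable def expWeight (t : ℝ) (n : ℕ) : ℂ := Complex.exp (-((n : ℂ) + 1) * t)

theorem expWeight_eq_ofReal (t : ℝ) (n : ℕ) :
    expWeight t n = (Real.exp (-((n : ℝ) + 1) * t) : ℂ) := by
  rw [expWeight, Complex.ofReal_exp]
  push_cast
  rfl

theorem Real.antitone_exp_neg_natCast_add_one_mul {t : ℝ} (ht : 0 ≤ t) :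
    Antitone fun n : ℕ => Real.exp (-((n : ℝ) + 1) * t) := fun m n hmn => by
  have : (m : ℝ) ≤ n := by exact_mod_cast hmn
  exact Real.exp_le_exp.mpr (by nlinarith)

theorem norm_expWeight_succ_sub (t : ℝ) (n : ℕ) :
    ‖expWeight t (n + 1) - expWeight t n‖ =
      ‖Real.exp (-(((n + 1 : ℕ) : ℝ) + 1) * t) - Real.exp (-((n : ℝ) + 1) * t)‖ := by
  rw [expWeight_eq_ofReal, expWeight_eq_ofReal, ← Complex.ofReal_sub, Complex.norm_real]

theorem summable_norm_expWeight_succ_sub {t : ℝ} (ht : 0 ≤ t) :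
    Summable fun n => ‖expWeight t (n + 1) - expWeight t n‖ := by
  simpa only [norm_expWeight_succ_sub] using
    (Real.antitone_exp_neg_natCast_add_one_mul ht).summable_norm_sub fun n => (Real.exp_pos _).le

theorem tsum_norm_expWeight_succ_sub_le {t : ℝ} (ht : 0 ≤ t) :
    ∑' n, ‖expWeight t (n + 1) - expWeight t n‖ ≤ 1 := by
  simp only [norm_expWeight_succ_sub]
  refine ((Real.antitone_exp_neg_natCast_add_one_mul ht).tsum_norm_sub_le
    fun n => (Real.exp_pos _).le).trans ?_
  exact Real.exp_le_one_iff.mpr (by simpa using ht)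

theorem norm_expWeight_le {t : ℝ} (ht : 0 ≤ t) (n : ℕ) : ‖expWeight t n‖ ≤ 1 := by
  rw [expWeight_eq_ofReal, Complex.norm_real, Real.norm_of_nonneg (Real.exp_pos _).le]
  exact Real.exp_le_one_iff.mpr (by nlinarith [n.cast_nonneg (α := ℝ)])

namespace SchauderBasis

section ExpSemigroup

variable {E : Type*} [NormedAddCommGroup E] [NormedSpace ℂ E] (b : SchauderBasis ℂ E)

noncomputable def expSemigroup (t : ℝ) : E →L[ℂ] E := b.multiplier (expWeight t)

theorem norm_expSemigroup_le {t : ℝ} (ht : 0 ≤ t) {C : ℝ} (hC : ∀ n, ‖b.proj n‖ ≤ C) :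
    ‖b.expSemigroup t‖ ≤ 1 + C := by
  have hC0 : 0 ≤ C := (norm_nonneg _).trans (hC 0)
  refine (b.norm_multiplier_le (summable_norm_expWeight_succ_sub ht) (norm_expWeight_le ht)
    hC).trans ?_
  gcongr
  nlinarith [tsum_norm_expWeight_succ_sub_le ht]

variable [CompleteSpace E]

theorem coord_expSemigroup {t : ℝ} (ht : 0 ≤ t) (x : E) (n : ℕ) :
    b.coord n (b.expSemigroup t x) = Complex.exp (-((n : ℂ) + 1) * t) * b.coord n x :=
  b.coord_multiplier (summable_norm_expWeight_succ_sub ht) x n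

theorem expSemigroup_zero : b.expSemigroup 0 = 1 := by
  have h : expWeight 0 = 1 := funext fun n => by simp [expWeight]
  rw [expSemigroup, h, multiplier_one]

theorem expSemigroup_add {t s : ℝ} (ht : 0 ≤ t) (hs : 0 ≤ s) :
    b.expSemigroup (t + s) = (b.expSemigroup t).comp (b.expSemigroup s) := by
  have h : expWeight (t + s) = expWeight t * expWeight s := funext fun n => by
    simp only [expWeight, Pi.mul_apply, ← Complex.exp_add]
    push_cast
    ring_nf
  rw [expSemigroup, expSemigroup, expSemigroup, b.multiplier_comp
    (summable_norm_expWeight_succ_sub ht) (summable_norm_expWeight_succ_sub hs)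
    (h ▸ summable_norm_expWeight_succ_sub (add_nonneg ht hs)), h]

theorem continuousOn_expSemigroup_apply (x : E) :
    ContinuousOn (fun t => b.expSemigroup t x) (Set.Ici 0) := by
  obtain ⟨C, hC⟩ := b.exists_norm_proj_le
  refine (ContinuousLinearMap.tendstoUniformlyOn_apply_of_norm_le
    (fun t ht => b.norm_expSemigroup_le ht hC) (b.tendsto_proj x)).continuousOn
    (Frequently.of_forall fun N => ?_)
  refine ContinuousOn.congr (f := fun t => ∑ n ∈ range N, (expWeight t n * b.coord n x) • b n)
    (by unfold expWeight; fun_prop) fun t ht => ?_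
  exact b.multiplier_apply_proj (summable_norm_expWeight_succ_sub ht) N x

theorem comp_expSemigroup_ne_one {t : ℝ} (ht : 0 < t) (T : E →L[ℂ] E) :
    T.comp (b.expSemigroup t) ≠ 1 := by
  intro hT
  have hle (n : ℕ) : 1 ≤ Real.exp (-((n : ℝ) + 1) * t) * ‖T‖ := by
    have := ContinuousLinearMap.one_le_norm_mul_opNorm_of_comp_eq_one hT
      (b.linearIndependent.ne_zero n) (b.multiplier_apply_basis
        (summable_norm_expWeight_succ_sub ht.le) n)
    rwa [expWeight_eq_ofReal, Complex.norm_real, Real.norm_of_nonneg (Real.exp_pos _).le] at this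
  have hlim : Tendsto (fun n : ℕ => Real.exp (-((n : ℝ) + 1) * t) * ‖T‖) atTop (𝓝 0) := by
    have : Tendsto (fun n : ℕ => ((n : ℝ) + 1) * t) atTop atTop :=
      (tendsto_natCast_atTop_atTop.atTop_add tendsto_const_nhds).atTop_mul_const ht
    simpa only [neg_mul, Function.comp_def, zero_mul] using
      (Real.tendsto_exp_atBot.comp (tendsto_neg_atTop_atBot.comp this)).mul_const ‖T‖
  obtain ⟨n, hn⟩ := (hlim.eventually (gt_mem_nhds one_pos)).exists
  exact (hle n).not_gt hn

end ExpSemigroup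

end SchauderBasis

theorem stmt17_general {H : Type*} [NormedAddCommGroup H] [InnerProductSpace ℂ H]
    [CompleteSpace H] (φ : ℕ → H)
    (hbasis : ∀ x : H, ∃! c : ℕ → ℂ,
      Tendsto (fun N => ∑ n ∈ Finset.range N, c n • φ (n + 1)) atTop (nhds x)) :
    let AGraph : H → H → Prop := fun x y => ∃ c : ℕ → ℂ,
      Tendsto (fun N => ∑ n ∈ Finset.range N, c n • φ (n + 1)) atTop (nhds x) ∧
      Tendsto (fun N => ∑ n ∈ Finset.range N, (-((n : ℂ) + 1) * c n) • φ (n + 1))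
        atTop (nhds y)
    -- A generates the C₀-semigroup e^{At}x = Σ e^{-nt} c_n φ_n :
    (∃ S : ℝ → H →L[ℂ] H,
      (∀ t : ℝ, 0 ≤ t → ∀ (x : H) (c : ℕ → ℂ),
        Tendsto (fun N => ∑ n ∈ Finset.range N, c n • φ (n + 1)) atTop (nhds x) →
        Tendsto (fun N => ∑ n ∈ Finset.range N,
          (Complex.exp (-((n : ℂ) + 1) * (t : ℂ)) * c n) • φ (n + 1)) atTop
          (nhds (S t x))) ∧
      S 0 = 1 ∧
      (∀ t s : ℝ, 0 ≤ t → 0 ≤ s → S (t + s) = (S t).comp (S s)) ∧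
      (∀ x : H, ContinuousOn (fun t : ℝ => S t x) (Set.Ici 0))) ∧
    -- the spectrum of A consists of the simple eigenvalues -n with eigenvectors φ_n :
    (∀ n : ℕ, AGraph (φ (n + 1)) ((-((n : ℂ) + 1)) • φ (n + 1)) ∧
      (∀ x y : H, AGraph x y → y = (-((n : ℂ) + 1)) • x →
        ∃ a : ℂ, x = a • φ (n + 1))) ∧
    (∀ lam : ℂ, (∀ n : ℕ, lam ≠ -((n : ℂ) + 1)) →
      ∃ R : H →L[ℂ] H, (∀ z : H, AGraph (R z) (z + lam • R z)) ∧
        ∀ x y : H, AGraph x y → R (y - lam • x) = x) ∧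
    -- A does not generate a C₀-group :
    ¬ ∃ G : ℝ → H →L[ℂ] H,
      (∀ t : ℝ, 0 ≤ t → ∀ (x : H) (c : ℕ → ℂ),
        Tendsto (fun N => ∑ n ∈ Finset.range N, c n • φ (n + 1)) atTop (nhds x) →
        Tendsto (fun N => ∑ n ∈ Finset.range N,
          (Complex.exp (-((n : ℂ) + 1) * (t : ℂ)) * c n) • φ (n + 1)) atTop
          (nhds (G t x))) ∧
      G 0 = 1 ∧ (∀ t s : ℝ, G (t + s) = (G t).comp (G s)) ∧
      (∀ x : H, Continuous fun t : ℝ => G t x) := by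
  intro AGraph
  let b : SchauderBasis ℂ H := HasUniqueExpansions.schauderBasis hbasis
  have hb (n : ℕ) : φ (n + 1) = b n := rfl
  have hexp (c : ℕ → ℂ) (x : H) : Tendsto (fun N => ∑ n ∈ Finset.range N, c n • φ (n + 1)) atTop
      (𝓝 x) ↔ c = fun n => b.coord n x := b.tendsto_sum_smul_iff
  have hA (x y : H) : AGraph x y ↔ ∀ n, b.coord n y = -((n : ℂ) + 1) * b.coord n x := by
    simp only [AGraph, hexp, exists_eq_left]
    simp only [funext_iff, eq_comm]
  simp only [hA, hexp, forall_eq]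
  simp only [funext_iff, hb]
  refine ⟨⟨b.expSemigroup, fun t ht x n => (b.coord_expSemigroup ht x n).symm,
    b.expSemigroup_zero, fun t s => b.expSemigroup_add, b.continuousOn_expSemigroup_apply⟩,
    fun n => ⟨fun k => ?_, fun x y hxy hy => ?_⟩, fun lam hlam => ?_, ?_⟩
  · rw [map_smul, b.ortho]
    by_cases hk : k = n <;> simp [hk]
  · have hd : Function.Injective fun n : ℕ => -((n : ℂ) + 1) := fun m n h => by simpa using h
    exact ⟨_, b.eq_coord_smul_of_diagonal_eigen hd fun k => hy ▸ hxy k⟩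
  · exact b.exists_diagonal_resolvent (fun n => (hlam n).symm)
      (summable_norm_inv_neg_natCast_add_one_sub lam)
  · rintro ⟨G, hGf, hG0, hGgrp, -⟩
    have hG1 : G 1 = b.expSemigroup 1 := by
      ext x
      exact b.ext_coord fun k => by rw [← hGf 1 zero_le_one x k, b.coord_expSemigroup zero_le_one]
    apply b.comp_expSemigroup_ne_one one_pos (G (-1))
    rw [← hG1, ← hGgrp, neg_add_cancel, hG0]

/-- Let `(φ_n)_{n≥1}` (here `φ (n+1)`) be a bounded Schauder basis of a complex
Hilbert space `H` which is not a Riesz basis, and define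
`A(Σ c_n φ_n) = -Σ n c_n φ_n` (encoded by its graph `AGraph`). Then: the semigroup
`e^{At}x = Σ e^{-nt} c_n φ_n` exists, consists of bounded operators for `t ≥ 0`, is a
strongly continuous semigroup; every `-n` is a simple eigenvalue of `A` with
eigenvector `φ_n` and these exhaust the spectrum (for `λ ∉ {-n}` a bounded resolvent
exists); but `A` does not generate a `C₀`-group. -/
theorem stmt17 {H : Type*} [NormedAddCommGroup H] [InnerProductSpace ℂ H]
    [CompleteSpace H] (φ : ℕ → H)
    (hbasis : ∀ x : H, ∃! c : ℕ → ℂ,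
      Tendsto (fun N => ∑ n ∈ Finset.range N, c n • φ (n + 1)) atTop (nhds x))
    (m M : ℝ) (hm : 0 < m)
    (hbdd : ∀ n : ℕ, 1 ≤ n → m ≤ ‖φ n‖ ∧ ‖φ n‖ ≤ M)
    (hnotRiesz : ¬ ∃ r s : ℝ, 0 < r ∧ 0 < s ∧ ∀ (c : ℕ → ℂ) (N : ℕ),
      r * ∑ n ∈ Finset.range N, ‖c n‖ ^ 2 ≤ ‖∑ n ∈ Finset.range N, c n • φ (n + 1)‖ ^ 2 ∧
      ‖∑ n ∈ Finset.range N, c n • φ (n + 1)‖ ^ 2 ≤ s * ∑ n ∈ Finset.range N, ‖c n‖ ^ 2) :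
    let AGraph : H → H → Prop := fun x y => ∃ c : ℕ → ℂ,
      Tendsto (fun N => ∑ n ∈ Finset.range N, c n • φ (n + 1)) atTop (nhds x) ∧
      Tendsto (fun N => ∑ n ∈ Finset.range N, (-((n : ℂ) + 1) * c n) • φ (n + 1))
        atTop (nhds y)
    -- A generates the C₀-semigroup e^{At}x = Σ e^{-nt} c_n φ_n :
    (∃ S : ℝ → H →L[ℂ] H,
      (∀ t : ℝ, 0 ≤ t → ∀ (x : H) (c : ℕ → ℂ),
        Tendsto (fun N => ∑ n ∈ Finset.range N, c n • φ (n + 1)) atTop (nhds x) →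
        Tendsto (fun N => ∑ n ∈ Finset.range N,
          (Complex.exp (-((n : ℂ) + 1) * (t : ℂ)) * c n) • φ (n + 1)) atTop
          (nhds (S t x))) ∧
      S 0 = 1 ∧
      (∀ t s : ℝ, 0 ≤ t → 0 ≤ s → S (t + s) = (S t).comp (S s)) ∧
      (∀ x : H, ContinuousOn (fun t : ℝ => S t x) (Set.Ici 0))) ∧
    -- the spectrum of A consists of the simple eigenvalues -n with eigenvectors φ_n :
    (∀ n : ℕ, AGraph (φ (n + 1)) ((-((n : ℂ) + 1)) • φ (n + 1)) ∧
      (∀ x y : H, AGraph x y → y = (-((n : ℂ) + 1)) • x →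
        ∃ a : ℂ, x = a • φ (n + 1))) ∧
    (∀ lam : ℂ, (∀ n : ℕ, lam ≠ -((n : ℂ) + 1)) →
      ∃ R : H →L[ℂ] H, (∀ z : H, AGraph (R z) (z + lam • R z)) ∧
        ∀ x y : H, AGraph x y → R (y - lam • x) = x) ∧
    -- A does not generate a C₀-group :
    ¬ ∃ G : ℝ → H →L[ℂ] H,
      (∀ t : ℝ, 0 ≤ t → ∀ (x : H) (c : ℕ → ℂ),
        Tendsto (fun N => ∑ n ∈ Finset.range N, c n • φ (n + 1)) atTop (nhds x) →
        Tendsto (fun N => ∑ n ∈ Finset.range N,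
          (Complex.exp (-((n : ℂ) + 1) * (t : ℂ)) * c n) • φ (n + 1)) atTop
          (nhds (G t x))) ∧
      G 0 = 1 ∧ (∀ t s : ℝ, G (t + s) = (G t).comp (G s)) ∧
      (∀ x : H, Continuous fun t : ℝ => G t x) :=
  stmt17_general φ hbasis
end
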